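/- arXiv:2511.18546 — 10 statements merged into one kernel-verified Lean document; each statement's English description precedes it below -/
import Mathlib

section
/- For every fractional assignment x ∈ [0,1]^{m×n} (each column sums to 1) and weights d ∈ ℝ_{>0}^n, there exists an integral assignment y ∈ {0,1}^{m×n} (each column has exactly one 1) such that for every row i ∈ [m] and every prefix length t ∈ [n], |∑_{j≤t} d_j (x_{ij} − y_{ij})| ≤ (1 − 1/(2m−2)) · max_{j∈[n]} d_j. -/
open Finset

namespace WCAux

noncomputable section

variable {m : ℕ}

/-- running discrepancy state -/
def sArr (V : ℕ → Fin m → ℝ) (D : ℕ → ℝ) (ι : ℕ → Fin m) (t : ℕ) (i : Fin m) : ℝ :=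
  ∑ j ∈ Finset.range t, (V j i - if ι j = i then D j else 0)

def phi (V : ℕ → Fin m → ℝ) (D : ℕ → ℝ) (ι : ℕ → Fin m) (t τ : ℕ) (i : Fin m) : ℝ :=
  sArr V D ι t i + ∑ j ∈ Finset.Ico t τ, V j i

def Phi (V : ℕ → Fin m → ℝ) (D : ℕ → ℝ) (ι : ℕ → Fin m) (t τ : ℕ) (S : Finset (Fin m)) : ℝ :=
  (∑ i ∈ S, phi V D ι t τ i) - ∑ j ∈ Finset.Ico t τ, D j

def Inv (V : ℕ → Fin m → ℝ) (D : ℕ → ℝ) (M B : ℝ) (n : ℕ) (ι : ℕ → Fin m) (t : ℕ) : Prop :=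
  (∀ τ ≤ t, ∀ i, |sArr V D ι τ i| ≤ B) ∧
  (∀ S : Finset (Fin m), ∀ τ : ℕ, t < τ → τ ≤ n → 2 ≤ S.card →
    (∀ i ∈ S, B < phi V D ι t τ i) → Phi V D ι t τ S ≤ M - S.card * (M - B))

section basic

variable (V : ℕ → Fin m → ℝ) (D : ℕ → ℝ) (ι : ℕ → Fin m)

lemma sArr_succ (t : ℕ) (i : Fin m) :
    sArr V D ι (t+1) i = sArr V D ι t i + (V t i - if ι t = i then D t else 0) := by
  unfold sArr
  rw [Finset.sum_range_succ]

lemma sArr_congr (ι' : ℕ → Fin m) (t : ℕ) (h : ∀ j < t, ι j = ι' j) (i : Fin m) :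
    sArr V D ι t i = sArr V D ι' t i := by
  unfold sArr
  refine Finset.sum_congr rfl ?_
  intro j hj
  rw [h j (Finset.mem_range.mp hj)]

lemma sum_sArr (hVD : ∀ j, ∑ i, V j i = D j) (t : ℕ) :
    ∑ i, sArr V D ι t i = 0 := by
  unfold sArr
  rw [Finset.sum_comm]
  refine Finset.sum_eq_zero ?_
  intro j _
  rw [Finset.sum_sub_distrib, hVD j, Finset.sum_ite_eq univ (ι j) (fun _ => D j)]
  simp

lemma phi_mono (hV0 : ∀ j i, 0 ≤ V j i) (t : ℕ) (i : Fin m) {τ τ' : ℕ} (h : τ ≤ τ') :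
    phi V D ι t τ i ≤ phi V D ι t τ' i := by
  unfold phi
  have : Finset.Ico t τ ⊆ Finset.Ico t τ' := Finset.Ico_subset_Ico le_rfl h
  have h2 := Finset.sum_le_sum_of_subset_of_nonneg this (fun j _ _ => hV0 j i)
  linarith

end basic

section step

variable (V : ℕ → Fin m → ℝ) (D : ℕ → ℝ) (M B : ℝ) (n : ℕ)

lemma step_lemma
    (hm2 : 2 ≤ m) (hM : 0 ≤ M) (hB : B = (1 - 1/(2*(m:ℝ)-2)) * M)
    (hV0 : ∀ j i, 0 ≤ V j i) (hVD : ∀ j i, V j i ≤ D j) (hDM : ∀ j, D j ≤ M)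
    (hVsum : ∀ j, ∑ i, V j i = D j)
    (ι : ℕ → Fin m) (t : ℕ) (htn : t < n) (hInv : Inv V D M B n ι t) :
    ∃ i₀ : Fin m, Inv V D M B n (Function.update ι t i₀) (t+1) := by
  have hmR : (2:ℝ) ≤ (m:ℝ) := by exact_mod_cast hm2
  have hden : (0:ℝ) < 2*(m:ℝ)-2 := by linarith
  have haux : (1 - 1/(2*(m:ℝ)-2)) * (2*(m:ℝ)-2) = 2*(m:ℝ)-3 := by
    rw [sub_mul, one_div, inv_mul_cancel₀ hden.ne']; ring
  have hBden : B * (2*(m:ℝ)-2) = (2*(m:ℝ)-3) * M := by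
    rw [hB]; linear_combination M * haux
  have hB0 : 0 ≤ B := by nlinarith
  have hBM : B ≤ M := by nlinarith
  have hM2B : M ≤ 2*B := by nlinarith
  have hmB : ((m:ℝ)-1)*M ≤ (m:ℝ)*B := by nlinarith
  -- state
  set s : Fin m → ℝ := sArr V D ι t with hs
  have hsum0 : ∑ i, s i = 0 := sum_sArr V D ι hVsum t
  have hbox : ∀ i, |s i| ≤ B := hInv.1 t le_rfl
  have hD0 : ∀ j, 0 ≤ D j := by
    intro j; rw [← hVsum j]; exact Finset.sum_nonneg (fun i _ => hV0 j i)
  -- eligible set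
  set E : Finset (Fin m) := univ.filter (fun i => -B ≤ s i + V t i - D t) with hEdef
  have hE : E.Nonempty := by
    by_contra h
    rw [Finset.not_nonempty_iff_eq_empty] at h
    have hall : ∀ i : Fin m, s i + V t i - D t < -B := by
      intro i
      by_contra hc
      push_neg at hc
      have : i ∈ E := by rw [hEdef]; exact Finset.mem_filter.mpr ⟨Finset.mem_univ i, hc⟩
      rw [h] at this; exact absurd this (Finset.notMem_empty i)
    have hne : (univ : Finset (Fin m)).Nonempty := by
      have : 0 < m := by omega
      exact ⟨⟨0, this⟩, Finset.mem_univ _⟩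
    have hsumlt := Finset.sum_lt_sum_of_nonempty hne (fun i _ => hall i)
    rw [Finset.sum_sub_distrib, Finset.sum_add_distrib, hsum0, hVsum t] at hsumlt
    simp only [Finset.sum_const, Finset.card_univ, Fintype.card_fin, nsmul_eq_mul] at hsumlt
    have hmM : ((m:ℝ)-1) * D t ≤ ((m:ℝ)-1)*M := by
      have : (0:ℝ) ≤ (m:ℝ)-1 := by linarith
      exact mul_le_mul_of_nonneg_left (hDM t) this
    nlinarith
  -- urgency
  set T : Fin m → Finset ℕ := fun i => (Finset.Icc (t+1) n).filter (fun τ => B < phi V D ι t τ i) with hT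
  have hTprop : ∀ i τ, τ ∈ T i ↔ (t+1 ≤ τ ∧ τ ≤ n ∧ B < phi V D ι t τ i) := by
    intro i τ
    rw [hT]
    simp only [Finset.mem_filter, Finset.mem_Icc]
    tauto
  obtain ⟨Urg, hUrg_ge, hUrg_le, hUrg_hot⟩ :
      ∃ Urg : Fin m → ℕ, (∀ i, t+1 ≤ Urg i) ∧
        (∀ i τ, t+1 ≤ τ → τ ≤ n → B < phi V D ι t τ i → Urg i ≤ τ) ∧
        (∀ i, Urg i ≤ n → B < phi V D ι t (Urg i) i) := by
    refine ⟨fun i => (insert (n+1) (T i)).min' (Finset.insert_nonempty _ _), ?_, ?_, ?_⟩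
    · intro i
      show t+1 ≤ (insert (n+1) (T i)).min' (Finset.insert_nonempty _ _)
      have hmem := (insert (n+1) (T i)).min'_mem (Finset.insert_nonempty _ _)
      rcases Finset.mem_insert.mp hmem with h | h
      · omega
      · exact ((hTprop i _).mp h).1
    · intro i τ h1 h2 h3
      exact Finset.min'_le _ _ (Finset.mem_insert_of_mem ((hTprop i τ).mpr ⟨h1, h2, h3⟩))
    · intro i hin
      have hin' : (insert (n+1) (T i)).min' (Finset.insert_nonempty _ _) ≤ n := hin
      show B < phi V D ι t ((insert (n+1) (T i)).min' (Finset.insert_nonempty _ _)) i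
      have hmem := (insert (n+1) (T i)).min'_mem (Finset.insert_nonempty _ _)
      rcases Finset.mem_insert.mp hmem with h | h
      · omega
      · exact ((hTprop i _).mp h).2.2

  -- choose i₀
  obtain ⟨i₀, hi₀E, hi₀min⟩ := Finset.exists_min_image E Urg hE
  have helig : -B ≤ s i₀ + V t i₀ - D t := by
    have h := hi₀E
    rw [hEdef, Finset.mem_filter] at h
    exact h.2
  have hIcot : Finset.Ico t (t+1) = {t} := by
    ext x
    simp only [Finset.mem_Ico, Finset.mem_singleton]
    omega
  have hphi_succ : ∀ i, phi V D ι t (t+1) i = s i + V t i := by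
    intro i
    unfold phi
    rw [hIcot, Finset.sum_singleton, ← hs]
  have ht1n : t + 1 ≤ n := htn
  have hone : ∀ i j, i ≠ j → B < s i + V t i → B < s j + V t j → False := by
    intro i j hij hi hj
    have hcard : ({i, j} : Finset (Fin m)).card = 2 := Finset.card_pair hij
    have hhot : ∀ a ∈ ({i, j} : Finset (Fin m)), B < phi V D ι t (t+1) a := by
      intro a ha
      rcases Finset.mem_insert.mp ha with h | h
      · rw [h, hphi_succ]; exact hi
      · rw [Finset.mem_singleton.mp h, hphi_succ]; exact hj
    have hb := hInv.2 {i, j} (t+1) (Nat.lt_succ_self t) ht1n (by rw [hcard]) hhot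
    have hPhi : Phi V D ι t (t+1) {i, j} = (s i + V t i) + (s j + V t j) - D t := by
      unfold Phi
      rw [Finset.sum_pair hij, hIcot, Finset.sum_singleton, hphi_succ, hphi_succ]
    rw [hPhi, hcard] at hb
    have hDMt := hDM t
    push_cast at hb
    linarith
  have hhotE : ∀ i, B < s i + V t i → i ∈ E := by
    intro i hi
    rw [hEdef, Finset.mem_filter]
    refine ⟨Finset.mem_univ _, ?_⟩
    have := hDM t
    linarith
  have hhot_i₀ : ∀ i, B < s i + V t i → i = i₀ := by
    intro i hi
    have hiE := hhotE i hi
    have h1 : Urg i ≤ t+1 := hUrg_le i (t+1) le_rfl ht1n (by rw [hphi_succ]; exact hi)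
    have h2 : Urg i₀ ≤ t+1 := le_trans (hi₀min i hiE) h1
    have h5 : B < s i₀ + V t i₀ := by
      have h6 := hUrg_hot i₀ (le_trans h2 ht1n)
      have h7 : Urg i₀ = t + 1 := le_antisymm h2 (hUrg_ge i₀)
      rw [h7, hphi_succ] at h6
      exact h6
    by_contra hne
    exact hone i i₀ hne hi h5
  refine ⟨i₀, ?_, ?_⟩
  · -- part (a)
    intro τ hτ i
    rcases Nat.lt_or_ge τ (t+1) with h | h
    · rw [sArr_congr V D (Function.update ι t i₀) ι τ
        (fun j hj => Function.update_of_ne (by omega) _ _) i]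
      exact hInv.1 τ (by omega) i
    · have hτ' : τ = t + 1 := by omega
      subst hτ'
      have hs' : sArr V D (Function.update ι t i₀) (t+1) i
          = s i + V t i - (if i₀ = i then D t else 0) := by
        rw [sArr_succ]
        rw [sArr_congr V D (Function.update ι t i₀) ι t
          (fun j hj => Function.update_of_ne (by omega) _ _) i]
        rw [Function.update_self, ← hs]
        ring
      rw [hs', abs_le]
      rcases eq_or_ne i₀ i with rfl | hne
      · rw [if_pos rfl]
        constructor
        · linarith
        · have h1 := hVD t i₀
          have h2 := (abs_le.mp (hbox i₀)).2
          linarith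
      · rw [if_neg hne]
        constructor
        · have h1 := hV0 t i
          have h2 := (abs_le.mp (hbox i)).1
          linarith
        · by_contra hc
          push_neg at hc
          exact hne ((hhot_i₀ i (by linarith)).symm)
  · -- part (b)
    intro S τ hτ1 hτn hcard hhot
    by_contra hgt
    push_neg at hgt
    have htτ : t < τ := by omega
    have hIcoSplit : ∀ f : ℕ → ℝ, ∑ j ∈ Finset.Ico t τ, f j = f t + ∑ j ∈ Finset.Ico (t+1) τ, f j :=
      fun f => Finset.sum_eq_sum_Ico_succ_bot htτ f
    have hs' : ∀ i, sArr V D (Function.update ι t i₀) (t+1) i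
        = s i + V t i - (if i₀ = i then D t else 0) := by
      intro i
      rw [sArr_succ]
      rw [sArr_congr V D (Function.update ι t i₀) ι t
        (fun j hj => Function.update_of_ne (by omega) _ _) i]
      rw [Function.update_self, ← hs]
      ring
    have hphi' : ∀ i, phi V D (Function.update ι t i₀) (t+1) τ i
        = phi V D ι t τ i - (if i₀ = i then D t else 0) := by
      intro i
      unfold phi
      rw [hs' i, hIcoSplit (fun j => V j i), ← hs]
      ring
    have hPhiRel : Phi V D (Function.update ι t i₀) (t+1) τ S
        = Phi V D ι t τ S + D t - (if i₀ ∈ S then D t else 0) := by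
      unfold Phi
      rw [Finset.sum_congr rfl (fun i _ => hphi' i)]
      rw [Finset.sum_sub_distrib, Finset.sum_ite_eq S i₀ (fun _ => D t), hIcoSplit D]
      ring
    by_cases hiS : i₀ ∈ S
    · have hhott : ∀ i ∈ S, B < phi V D ι t τ i := by
        intro i hi
        have h1 := hhot i hi
        rw [hphi' i] at h1
        have hite : (0:ℝ) ≤ (if i₀ = i then D t else 0) := by
          split
          · exact hD0 t
          · exact le_rfl
        linarith
      have hb := hInv.2 S τ htτ hτn hcard hhott
      rw [hPhiRel, if_pos hiS] at hgt
      linarith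
    · have hhott : ∀ i ∈ S, B < phi V D ι t τ i := by
        intro i hi
        have h1 := hhot i hi
        rw [hphi' i, if_neg (by rintro rfl; exact hiS hi)] at h1
        linarith
      have hPhit : M - S.card * (M - B) - D t < Phi V D ι t τ S := by
        rw [hPhiRel, if_neg hiS] at hgt
        linarith
      by_cases h2a : Phi V D ι t τ S ≤ M - S.card * (M - B)
      swap
      · push_neg at h2a
        exact absurd (hInv.2 S τ htτ hτn hcard hhott) (not_le.mpr h2a)
      by_cases hj : ∃ j, j ∉ S ∧ B < phi V D ι t τ j
      · obtain ⟨j, hjS, hjhot⟩ := hj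
        have hcard' : ((insert j S).card : ℝ) = (S.card : ℝ) + 1 := by
          rw [Finset.card_insert_of_notMem hjS]
          push_cast
          ring
        have hhott' : ∀ i ∈ insert j S, B < phi V D ι t τ i := by
          intro i hi
          rcases Finset.mem_insert.mp hi with rfl | hi
          · exact hjhot
          · exact hhott i hi
        have hb := hInv.2 (insert j S) τ htτ hτn
          (by rw [Finset.card_insert_of_notMem hjS]; omega) hhott'
        have hPhiS' : Phi V D ι t τ (insert j S) = Phi V D ι t τ S + phi V D ι t τ j := by
          unfold Phi
          rw [Finset.sum_insert hjS]
          ring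
        rw [hPhiS', hcard'] at hb
        have := hDM t
        linarith
      · push_neg at hj
        have hSnotE : ∀ i ∈ S, s i + V t i - D t < -B := by
          intro i hi
          by_contra hc
          push_neg at hc
          have hiE : i ∈ E := by
            rw [hEdef, Finset.mem_filter]
            exact ⟨Finset.mem_univ _, hc⟩
          have h1 : Urg i ≤ τ := hUrg_le i τ (by omega) hτn (hhott i hi)
          have h2 : Urg i₀ ≤ τ := le_trans (hi₀min i hiE) h1
          have h3 : B < phi V D ι t (Urg i₀) i₀ := hUrg_hot i₀ (le_trans h2 hτn)
          have h4 : B < phi V D ι t τ i₀ := lt_of_lt_of_le h3 (phi_mono V D ι hV0 t i₀ h2)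
          exact absurd h4 (not_lt.mpr (hj i₀ hiS))
        have hSne : S.Nonempty := Finset.card_pos.mp (by omega)
        have hsumS : ∑ i ∈ S, (s i + V t i - D t) < ∑ _i ∈ S, (-B : ℝ) :=
          Finset.sum_lt_sum_of_nonempty hSne (fun i hi => hSnotE i hi)
        rw [Finset.sum_const, nsmul_eq_mul] at hsumS
        have hJsum : ∑ i ∈ S, (∑ j ∈ Finset.Ico (t+1) τ, V j i) ≤ ∑ j ∈ Finset.Ico (t+1) τ, D j := by
          rw [Finset.sum_comm]
          refine Finset.sum_le_sum ?_
          intro j _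
          rw [← hVsum j]
          exact Finset.sum_le_sum_of_subset_of_nonneg (Finset.subset_univ S) (fun i _ _ => hV0 j i)
        have e1 : ∑ i ∈ S, phi V D ι t τ i
            = (∑ i ∈ S, (s i + V t i)) + ∑ i ∈ S, (∑ j ∈ Finset.Ico (t+1) τ, V j i) := by
          rw [← Finset.sum_add_distrib]
          refine Finset.sum_congr rfl ?_
          intro i _
          unfold phi
          rw [hIcoSplit (fun j => V j i), ← hs]
          ring
        have e2 : ∑ i ∈ S, (s i + V t i) = (∑ i ∈ S, (s i + V t i - D t)) + (S.card : ℝ) * D t := by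
          rw [Finset.sum_sub_distrib, Finset.sum_const, nsmul_eq_mul]
          ring
        have hPhile : Phi V D ι t τ S ≤ (∑ i ∈ S, (s i + V t i - D t)) + (S.card : ℝ) * D t - D t := by
          unfold Phi
          rw [e1, e2, hIcoSplit D]
          linarith
        have hcardle : (S.card : ℝ) ≤ (m : ℝ) - 1 := by
          have hsub : S ⊆ univ.erase i₀ := fun x hx =>
            Finset.mem_erase.mpr ⟨by rintro rfl; exact hiS hx, Finset.mem_univ _⟩
          have h1 : S.card ≤ m - 1 := by
            calc S.card ≤ (univ.erase i₀).card := Finset.card_le_card hsub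
            _ = m - 1 := by
              rw [Finset.card_erase_of_mem (Finset.mem_univ _), Finset.card_univ, Fintype.card_fin]
          have h2 : (S.card : ℝ) ≤ ((m - 1 : ℕ) : ℝ) := by exact_mod_cast h1
          rwa [Nat.cast_sub (by omega), Nat.cast_one] at h2
        have hk2 : (2:ℝ) ≤ (S.card : ℝ) := by exact_mod_cast hcard
        have hDt := hDM t
        have hD0t := hD0 t
        nlinarith [mul_nonneg hM (sub_nonneg.mpr hcardle),
          mul_le_mul_of_nonneg_left hDt (by linarith : (0:ℝ) ≤ (S.card : ℝ))]

end step

lemma exists_iota {m : ℕ}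
    (V : ℕ → Fin m → ℝ) (D : ℕ → ℝ) (M B : ℝ) (n : ℕ)
    (hm2 : 2 ≤ m) (hM : 0 ≤ M) (hB : B = (1 - 1/(2*(m:ℝ)-2)) * M)
    (hV0 : ∀ j i, 0 ≤ V j i) (hVD : ∀ j i, V j i ≤ D j) (hDM : ∀ j, D j ≤ M)
    (hVsum : ∀ j, ∑ i, V j i = D j) :
    ∃ ι : ℕ → Fin m, Inv V D M B n ι n := by
  have hmR : (2:ℝ) ≤ (m:ℝ) := by exact_mod_cast hm2
  have hden : (0:ℝ) < 2*(m:ℝ)-2 := by linarith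
  have haux : (1 - 1/(2*(m:ℝ)-2)) * (2*(m:ℝ)-2) = 2*(m:ℝ)-3 := by
    rw [sub_mul, one_div, inv_mul_cancel₀ hden.ne']; ring
  have hBden : B * (2*(m:ℝ)-2) = (2*(m:ℝ)-3) * M := by
    rw [hB]; linear_combination M * haux
  have hB0 : 0 ≤ B := by nlinarith
  have hBM : B ≤ M := by nlinarith
  have hmB : ((m:ℝ)-1) * M ≤ (m:ℝ) * B := by nlinarith
  suffices h : ∀ t, t ≤ n → ∃ ι : ℕ → Fin m, Inv V D M B n ι t from h n le_rfl
  intro t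
  induction t with
  | zero =>
    intro _
    refine ⟨fun _ => ⟨0, by omega⟩, ?_, ?_⟩
    · intro τ hτ i
      interval_cases τ
      have h0 : sArr V D (fun _ => (⟨0, by omega⟩ : Fin m)) 0 i = 0 := by
        unfold sArr
        simp
      rw [h0]
      simpa using hB0
    · intro S τ h0τ hτn hcard hhot
      have hphi0 : ∀ i, phi V D (fun _ => (⟨0, by omega⟩ : Fin m)) 0 τ i
          = ∑ j ∈ Finset.Ico 0 τ, V j i := by
        intro i
        unfold phi sArr
        simp
      have h1 : Phi V D (fun _ => (⟨0, by omega⟩ : Fin m)) 0 τ S ≤ 0 := by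
        unfold Phi
        rw [Finset.sum_congr rfl (fun i _ => hphi0 i)]
        have h2 : ∑ i ∈ S, (∑ j ∈ Finset.Ico 0 τ, V j i) ≤ ∑ j ∈ Finset.Ico 0 τ, D j := by
          rw [Finset.sum_comm]
          refine Finset.sum_le_sum ?_
          intro j _
          rw [← hVsum j]
          exact Finset.sum_le_sum_of_subset_of_nonneg (Finset.subset_univ S) (fun i _ _ => hV0 j i)
        linarith
      have hkm : (S.card : ℝ) ≤ (m : ℝ) := by
        have h3 : S.card ≤ m := by
          calc S.card ≤ (univ : Finset (Fin m)).card := Finset.card_le_card (Finset.subset_univ S)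
          _ = m := by rw [Finset.card_univ, Fintype.card_fin]
        exact_mod_cast h3
      have hMB0 : 0 ≤ M - B := by linarith
      have h4 : (S.card : ℝ) * (M - B) ≤ (m : ℝ) * (M - B) :=
        mul_le_mul_of_nonneg_right hkm hMB0
      nlinarith
  | succ t ih =>
    intro ht
    obtain ⟨ι, hι⟩ := ih (by omega)
    obtain ⟨i₀, hi₀⟩ := step_lemma V D M B n hm2 hM hB hV0 hVD hDM hVsum ι t (by omega) hι
    exact ⟨Function.update ι t i₀, hi₀⟩

end

end WCAux


open WCAux

/-- Weighted chairman assignment theorem: for every fractional assignment `x` and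
positive weights `d`, there is an integral assignment `y` with all prefix
discrepancies bounded by `(1 - 1/(2m-2)) * max_j d_j`. -/
theorem weighted_chairman (m n : ℕ) (hm : 1 < m) (hn : 0 < n)
    (x : Fin m → Fin n → ℝ) (d : Fin n → ℝ)
    (hx01 : ∀ i j, 0 ≤ x i j ∧ x i j ≤ 1)
    (hxcol : ∀ j, ∑ i, x i j = 1)
    (hd : ∀ j, 0 < d j) :
    ∃ y : Fin m → Fin n → ℝ,
      (∀ i j, y i j = 0 ∨ y i j = 1) ∧
      (∀ j, ∑ i, y i j = 1) ∧
      ∀ i t, |∑ j ∈ Iic t, d j * (x i j - y i j)| ≤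
        (1 - 1 / (2 * (m : ℝ) - 2)) * (univ.sup' ⟨⟨0, hn⟩, mem_univ _⟩ d) := by
  classical
  set M : ℝ := univ.sup' ⟨⟨0, hn⟩, mem_univ _⟩ d with hM_def
  have hdM : ∀ j : Fin n, d j ≤ M := fun j => Finset.le_sup' d (Finset.mem_univ j)
  have hM : 0 ≤ M := le_trans (hd ⟨0, hn⟩).le (hdM ⟨0, hn⟩)
  set B : ℝ := (1 - 1 / (2 * (m : ℝ) - 2)) * M with hB_def
  set V : ℕ → Fin m → ℝ := fun j i => if h : j < n then d ⟨j, h⟩ * x i ⟨j, h⟩ else 0 with hV_def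
  set D : ℕ → ℝ := fun j => if h : j < n then d ⟨j, h⟩ else 0 with hD_def
  have hV0 : ∀ j i, 0 ≤ V j i := by
    intro j i
    rw [hV_def]
    dsimp only
    split
    · rename_i h
      exact mul_nonneg (hd ⟨j, h⟩).le (hx01 i ⟨j, h⟩).1
    · exact le_rfl
  have hVD : ∀ j i, V j i ≤ D j := by
    intro j i
    rw [hV_def, hD_def]
    dsimp only
    split
    · rename_i h
      exact mul_le_of_le_one_right (hd ⟨j, h⟩).le (hx01 i ⟨j, h⟩).2
    · exact le_rfl
  have hDM : ∀ j, D j ≤ M := by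
    intro j
    rw [hD_def]
    dsimp only
    split
    · rename_i h
      exact hdM ⟨j, h⟩
    · exact hM
  have hVsum : ∀ j, ∑ i, V j i = D j := by
    intro j
    rw [hV_def, hD_def]
    dsimp only
    by_cases h : j < n
    · simp only [dif_pos h]
      rw [← Finset.mul_sum, hxcol ⟨j, h⟩, mul_one]
    · simp only [dif_neg h]
      simp
  obtain ⟨ι, hι⟩ := exists_iota V D M B n hm hM hB_def hV0 hVD hDM hVsum
  refine ⟨fun i j => if ι j.val = i then (1:ℝ) else 0, ?_, ?_, ?_⟩
  · intro i j
    dsimp only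
    split
    · right; rfl
    · left; rfl
  · intro j
    simp
  · intro i t
    have hkey : ∑ j ∈ Iic t, d j * (x i j - (if ι j.val = i then (1:ℝ) else 0))
        = sArr V D ι (t.val + 1) i := by
      unfold sArr
      refine Finset.sum_bij' (fun (j : Fin n) (_ : j ∈ Iic t) => j.val)
        (fun (j : ℕ) (hj : j ∈ Finset.range (t.val+1)) => (⟨j, by
          have h1 := Finset.mem_range.mp hj
          have h2 := t.isLt
          omega⟩ : Fin n)) ?_ ?_ ?_ ?_ ?_
      · intro j hj
        simp only [Finset.mem_range]
        have h1 := Finset.mem_Iic.mp hj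
        have h2 : (j : ℕ) ≤ (t : ℕ) := h1
        omega
      · intro j hj
        simp only [Finset.mem_Iic]
        have h1 := Finset.mem_range.mp hj
        have h2 : j ≤ (t : ℕ) := by omega
        exact Fin.le_def.mpr h2
      · intro j hj
        rfl
      · intro j hj
        rfl
      · intro j hj
        have hjn : (j : ℕ) < n := j.isLt
        rw [hV_def, hD_def]
        dsimp only
        rw [dif_pos hjn, dif_pos hjn]
        have heq : (⟨(j : ℕ), hjn⟩ : Fin n) = j := rfl
        rw [heq, mul_sub]
        congr 1
        split
        · rw [mul_one]
        · rw [mul_zero]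
    rw [hkey]
    exact hι.1 (t.val + 1) (by omega) i
end

section
/- In the Earliest Deadline Algorithm with ε = 1/(2m−2), at every time step t the candidate set C(t) = {i ∈ [m] : P_t(i) ≥ N_{t−1}(i) + min{d_t/m, ε}} is nonempty, where P_t(i) = ∑_{j≤t} d_j x_{ij} and N_{t−1}(i) = ∑_{j<t} d_j y_{ij} for the assignment y built so far. -/
open Finset

/-- In the Earliest Deadline Algorithm with `ε = 1/(2m-2)`, the candidate set
`C(t) = {i : P_t(i) ≥ N_{t-1}(i) + min(d_t/m, ε)}` is nonempty at every time `t`. -/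
theorem candidate_set_nonempty (m n : ℕ) (hm : 1 < m) (hn : 0 < n)
    (x : Fin m → Fin n → ℝ) (d : Fin n → ℝ)
    (hx01 : ∀ i j, 0 ≤ x i j ∧ x i j ≤ 1)
    (hxcol : ∀ j, ∑ i, x i j = 1)
    (hd : ∀ j, 0 < d j ∧ d j ≤ 1)
    (t : Fin n) (y : Fin m → Fin n → ℝ)
    (hy01 : ∀ i j, j < t → y i j = 0 ∨ y i j = 1)
    (hycol : ∀ j, j < t → ∑ i, y i j = 1) :
    ∃ i : Fin m, (∑ j ∈ Iic t, d j * x i j) ≥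
      (∑ j ∈ Iio t, d j * y i j) + min (d t / m) (1 / (2 * (m : ℝ) - 2)) := by
  set f : Fin m → ℝ := fun i => (∑ j ∈ Iic t, d j * x i j) - ∑ j ∈ Iio t, d j * y i j with hf
  have hsum : ∑ i, f i = d t := by
    simp only [hf, Finset.sum_sub_distrib]
    rw [Finset.sum_comm, Finset.sum_comm (s := univ)]
    have h1 : ∑ j ∈ Iic t, ∑ i, d j * x i j = ∑ j ∈ Iic t, d j := by
      refine Finset.sum_congr rfl fun j _ => ?_
      rw [← Finset.mul_sum, hxcol, mul_one]
    have h2 : ∑ j ∈ Iio t, ∑ i, d j * y i j = ∑ j ∈ Iio t, d j := by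
      refine Finset.sum_congr rfl fun j hj => ?_
      rw [← Finset.mul_sum, hycol j (mem_Iio.mp hj), mul_one]
    rw [h1, h2]
    rw [show Iic t = insert t (Iio t) from (Finset.Iio_insert t).symm,
      Finset.sum_insert (by simp)]
    ring
  have hm0 : (0:ℝ) < m := by positivity
  have hconst : ∑ _i : Fin m, d t / m ≤ ∑ i, f i := by
    rw [hsum, Finset.sum_const, card_univ, Fintype.card_fin, nsmul_eq_mul]
    rw [mul_div_cancel₀ _ (ne_of_gt hm0)]
  obtain ⟨i, -, hi⟩ := Finset.exists_le_of_sum_le ⟨⟨0, by omega⟩, mem_univ _⟩ hconst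
  refine ⟨i, ?_⟩
  have : min (d t / m) (1 / (2 * (m : ℝ) - 2)) ≤ f i :=
    le_trans (min_le_left _ _) hi
  simp only [hf] at this
  linarith
end

section
/- Let y be an assignment produced by a process where at each time t the selected row s_t satisfies P_t(s_t) ≥ N_{t−1}(s_t) + min{d_t/m, ε} with ε = 1/(2m−2). Then for every i ∈ [m] and t ∈ [n], the signed prefix discrepancy Δ_t(i) = ∑_{j≤t} d_j (x_{ij} − y_{ij}) satisfies Δ_t(i) ≥ −1 + ε. -/
open Finset

/-- If at each time `t` the selected row `s t` satisfies the candidate condition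
`P_t(s_t) ≥ N_{t-1}(s_t) + min(d_t/m, ε)` with `ε = 1/(2m-2)`, then every prefix
discrepancy satisfies `Δ_t(i) ≥ -1 + ε`. -/
theorem lower_bound_discrepancy (m n : ℕ) (hm : 1 < m) (hn : 0 < n)
    (x : Fin m → Fin n → ℝ) (d : Fin n → ℝ)
    (hx01 : ∀ i j, 0 ≤ x i j ∧ x i j ≤ 1)
    (hxcol : ∀ j, ∑ i, x i j = 1)
    (hd : ∀ j, 0 < d j ∧ d j ≤ 1)
    (s : Fin n → Fin m) (y : Fin m → Fin n → ℝ)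
    (hy : ∀ i t, y i t = if i = s t then 1 else 0)
    (hcand : ∀ t : Fin n,
      (∑ j ∈ Iic t, d j * x (s t) j) ≥
        (∑ j ∈ Iio t, d j * y (s t) j) + min (d t / m) (1 / (2 * (m : ℝ) - 2))) :
    ∀ (i : Fin m) (t : Fin n),
      ∑ j ∈ Iic t, d j * (x i j - y i j) ≥ -1 + 1 / (2 * (m : ℝ) - 2) := by
  have hm2 : (2:ℝ) ≤ (m:ℝ) := by exact_mod_cast hm
  have hm0 : (0:ℝ) < (m:ℝ) := by linarith
  have hden : (0:ℝ) < 2 * (m:ℝ) - 2 := by linarith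
  have heps_pos : (0:ℝ) < 1 / (2 * (m:ℝ) - 2) := by positivity
  have heps_le : 1 / (2 * (m:ℝ) - 2) ≤ 1 := by
    rw [div_le_one hden]; linarith
  have heps_le_inv : 1 / (2 * (m:ℝ) - 2) ≤ 1 / (m:ℝ) :=
    one_div_le_one_div_of_le hm0 (by linarith)
  -- key split of Iic sum
  have hsplit : ∀ (f : Fin n → ℝ) (t : Fin n),
      ∑ j ∈ Iic t, f j = (∑ j ∈ Iio t, f j) + f t := by
    intro f t
    rw [← Finset.Iio_insert, Finset.sum_insert (by simp)]
    ring
  suffices H : ∀ k, ∀ (hk : k < n), ∀ i : Fin m,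
      ∑ j ∈ Iic (⟨k, hk⟩ : Fin n), d j * (x i j - y i j)
        ≥ -1 + 1 / (2 * (m : ℝ) - 2) by
    intro i t
    have := H t.val t.isLt i
    simpa using this
  intro k
  induction k using Nat.strong_induction_on with
  | _ k ih =>
    intro hk i
    set t : Fin n := ⟨k, hk⟩ with ht
    by_cases h : i = s t
    · -- candidate step
      have hyt : y i t = 1 := by rw [hy]; simp [h]
      have hsum : ∑ j ∈ Iic t, d j * (x i j - y i j)
          = (∑ j ∈ Iic t, d j * x i j) - ((∑ j ∈ Iio t, d j * y i j) + d t * 1) := by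
        rw [← hyt]
        rw [← hsplit (fun j => d j * y i j) t]
        rw [← Finset.sum_sub_distrib]
        congr 1; ext j; ring
      have hc := hcand t
      rw [h] at hsum
      have hdt := hd t
      have hmin : min (d t / m) (1 / (2 * (m:ℝ) - 2)) - d t ≥ -1 + 1 / (2 * (m:ℝ) - 2) := by
        rcases le_total (d t / m) (1 / (2 * (m:ℝ) - 2)) with hle | hle
        · rw [min_eq_left hle]
          have h1 : d t / m ≥ d t / m := le_refl _
          have h2 : d t * (1 / (m:ℝ) - 1) ≥ 1 * (1 / (m:ℝ) - 1) := by
            apply mul_le_mul_of_nonpos_right hdt.2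
            have : 1 / (m:ℝ) ≤ 1 := by rw [div_le_one hm0]; linarith
            linarith
          have : d t / m - d t = d t * (1 / (m:ℝ) - 1) := by field_simp
          rw [this]
          calc d t * (1 / (m:ℝ) - 1) ≥ 1 * (1 / (m:ℝ) - 1) := h2
            _ = -1 + 1 / (m:ℝ) := by ring
            _ ≥ -1 + 1 / (2 * (m:ℝ) - 2) := by linarith
        · rw [min_eq_right hle]
          linarith [hdt.2]
      rw [h, hsum]
      linarith [hc, hmin]
    · -- non-selected row
      have hyt : y i t = 0 := by rw [hy]; simp [h]
      have hxt := (hx01 i t).1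
      have hdt := (hd t).1
      rw [hsplit (fun j => d j * (x i j - y i j)) t, hyt]
      have hlast : 0 ≤ d t * (x i t - 0) := by
        apply mul_nonneg hdt.le; linarith
      rcases Nat.eq_zero_or_pos k with hk0 | hkpos
      · have hempty : Iio t = (∅ : Finset (Fin n)) := by
          ext j; simp [Fin.lt_def, ht, hk0]
        rw [hempty]
        simp only [Finset.sum_empty]
        linarith
      · obtain ⟨k', rfl⟩ := Nat.exists_eq_succ_of_ne_zero hkpos.ne'
        have hk' : k' < n := Nat.lt_of_succ_lt hk
        have hIio : Iio t = Iic (⟨k', hk'⟩ : Fin n) := by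
          ext j
          simp only [Finset.mem_Iio, Finset.mem_Iic, Fin.lt_def, Fin.le_def, ht]
          omega
        rw [hIio]
        have := ih k' (Nat.lt_succ_self k') hk' i
        linarith
end

section
/- There exists a fractional assignment x ∈ [0,1]^{m×(m−1)} such that for every integral assignment y ∈ {0,1}^{m×(m−1)}, there exist i ∈ [m] and t ∈ [m−1] with |∑_{j≤t} (x_{ij} − y_{ij})| ≥ 1 − 1/(2m−2). Concretely, for m ≥ 3 one may take x_{i,1} = 1/(2m−2) for i < m, x_{m,1} = 1/2, x_{m,j} = 0 for j > 1, and x_{i,j} = 1/(m−1) otherwise. -/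
open Finset

noncomputable def xval (k : ℕ) (i : Fin (k+2)) (j : Fin (k+1)) : ℝ :=
  if (i : ℕ) = k + 1 then (if (j : ℕ) = 0 then 1/2 else 0)
  else (if (j : ℕ) = 0 then 1/(2*((k:ℝ)+1)) else 1/((k:ℝ)+1))

lemma xval_bounds (k : ℕ) (i : Fin (k+2)) (j : Fin (k+1)) :
    0 ≤ xval k i j ∧ xval k i j ≤ 1 := by
  have h1 : (1:ℝ) ≤ (k:ℝ)+1 := by have := Nat.cast_nonneg (α := ℝ) k; linarith
  unfold xval
  split_ifs <;> constructor <;> try positivity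
  · norm_num
  · rw [div_le_one (by positivity)]; linarith
  · rw [div_le_one (by positivity)]; linarith

lemma xval_col (k : ℕ) (j : Fin (k+1)) : ∑ i, xval k i j = 1 := by
  rw [Fin.sum_univ_castSucc]
  have h1 : ∀ i : Fin (k+1), xval k i.castSucc j =
      (if (j:ℕ) = 0 then 1/(2*((k:ℝ)+1)) else 1/((k:ℝ)+1)) := by
    intro i
    unfold xval
    rw [if_neg]
    simp only [Fin.coe_castSucc]
    omega
  have h2 : xval k (Fin.last (k+1)) j = (if (j:ℕ) = 0 then 1/2 else 0) := by
    unfold xval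
    rw [if_pos (by simp [Fin.val_last])]
  rw [Finset.sum_congr rfl (fun i _ => h1 i), h2, Finset.sum_const, card_univ,
    Fintype.card_fin, nsmul_eq_mul]
  have hk : ((k:ℝ)+1) ≠ 0 := by positivity
  by_cases hj : (j:ℕ) = 0 <;> simp only [hj, if_true, if_false] <;> push_cast <;>
    field_simp <;> ring

lemma xval_row (k : ℕ) (i : Fin (k+2)) (hi : (i:ℕ) ≠ k+1) :
    ∑ j, xval k i j = 1 - 1/(2*((k:ℝ)+1)) := by
  have h : ∀ j : Fin (k+1), xval k i j =
      if (j:ℕ) = 0 then 1/(2*((k:ℝ)+1)) else 1/((k:ℝ)+1) := by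
    intro j; unfold xval; rw [if_neg hi]
  simp_rw [h]
  rw [Fin.sum_univ_succ]
  simp only [Fin.val_zero, if_true, Fin.val_succ, Nat.succ_ne_zero, if_false,
    Finset.sum_const, card_univ, Fintype.card_fin, nsmul_eq_mul]
  have hk : ((k:ℝ)+1) ≠ 0 := by positivity
  field_simp
  ring

lemma xval_last_prefix (k : ℕ) (j : Fin (k+1)) :
    ∑ j' ∈ Iic j, xval k (Fin.last (k+1)) j' = 1/2 := by
  have h0 : (⟨0, Nat.succ_pos k⟩ : Fin (k+1)) ∈ Iic j := by
    simp [Finset.mem_Iic, Fin.le_def]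
  rw [Finset.sum_eq_single_of_mem ⟨0, Nat.succ_pos k⟩ h0]
  · unfold xval; simp [Fin.val_last]
  · intro b _ hb
    unfold xval
    rw [if_pos (by simp [Fin.val_last]), if_neg]
    intro hb0
    exact hb (Fin.ext hb0)

/-- Lower bound for the chairman assignment problem: there is a fractional assignment
on `m` rows and `m-1` columns such that every integral assignment incurs prefix
discrepancy at least `1 - 1/(2m-2)` somewhere. -/
theorem chairman_lower_bound (m : ℕ) (hm : 1 < m) :
    ∃ x : Fin m → Fin (m - 1) → ℝ,
      (∀ i j, 0 ≤ x i j ∧ x i j ≤ 1) ∧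
      (∀ j, ∑ i, x i j = 1) ∧
      ∀ y : Fin m → Fin (m - 1) → ℝ,
        (∀ i j, y i j = 0 ∨ y i j = 1) →
        (∀ j, ∑ i, y i j = 1) →
        ∃ (i : Fin m) (t : Fin (m - 1)),
          |∑ j ∈ Iic t, (x i j - y i j)| ≥ 1 - 1 / (2 * (m : ℝ) - 2) := by
  obtain ⟨k, rfl⟩ : ∃ k, m = k + 2 := ⟨m - 2, by omega⟩
  have hk0 : (0:ℝ) ≤ (k:ℝ) := Nat.cast_nonneg k
  have hR : 1 - 1 / (2 * (((k:ℕ)+2:ℕ) : ℝ) - 2) = 1 - 1/(2*((k:ℝ)+1)) := by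
    push_cast; ring_nf
  have hfrac : (0:ℝ) < 1/(2*((k:ℝ)+1)) := by positivity
  have hhalf : 1/(2*((k:ℝ)+1)) ≤ 1/2 :=
    one_div_le_one_div_of_le (by norm_num) (by linarith)
  show ∃ x : Fin (k+2) → Fin (k+1) → ℝ,
      (∀ i j, 0 ≤ x i j ∧ x i j ≤ 1) ∧
      (∀ j, ∑ i, x i j = 1) ∧
      ∀ y : Fin (k+2) → Fin (k+1) → ℝ,
        (∀ i j, y i j = 0 ∨ y i j = 1) →
        (∀ j, ∑ i, y i j = 1) →
        ∃ (i : Fin (k+2)) (t : Fin (k+1)),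
          |∑ j ∈ Iic t, (x i j - y i j)| ≥ 1 - 1 / (2 * (((k+2:ℕ)) : ℝ) - 2)
  refine ⟨xval k, fun i j => xval_bounds k i j, xval_col k, ?_⟩
  intro y hy01 hycol
  set j0 : Fin (k+1) := ⟨0, Nat.succ_pos k⟩ with hj0def
  have hynn : ∀ i j, 0 ≤ y i j := by
    intro i j; rcases hy01 i j with h|h <;> simp [h]
  have hexists : ∀ j : Fin (k+1), ∃ i, y i j = 1 := by
    intro j
    by_contra h
    push_neg at h
    have hz : ∑ i, y i j = 0 :=
      Finset.sum_eq_zero (fun i _ => (hy01 i j).resolve_right (h i))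
    rw [hycol j] at hz; norm_num at hz
  obtain ⟨i0, hi0⟩ := hexists j0
  rcases eq_or_ne (i0 : ℕ) (k+1) with hlast | hlast
  · -- i0 is the last row
    have hi0last : i0 = Fin.last (k+1) := Fin.ext (by simpa [Fin.val_last] using hlast)
    by_cases hrest : ∃ j : Fin (k+1), (j:ℕ) ≠ 0 ∧ y i0 j = 1
    · obtain ⟨j, hjne, hyj⟩ := hrest
      refine ⟨i0, j, ?_⟩
      have hxs : ∑ j' ∈ Iic j, xval k i0 j' = 1/2 := by
        rw [hi0last]; exact xval_last_prefix k j
      have hj0mem : j0 ∈ Iic j := by simp [Finset.mem_Iic, Fin.le_def, hj0def]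
      have hjmem : j ∈ Iic j := Finset.mem_Iic.2 le_rfl
      have hys : (2:ℝ) ≤ ∑ j' ∈ Iic j, y i0 j' := by
        have hne : j0 ≠ j := by
          intro h; exact hjne (by rw [← h])
        have hsub : ({j0, j} : Finset (Fin (k+1))) ⊆ Iic j := by
          intro a ha
          rcases Finset.mem_insert.1 ha with rfl | ha
          · exact hj0mem
          · rw [Finset.mem_singleton.1 ha]; exact hjmem
        calc (2:ℝ) = y i0 j0 + y i0 j := by rw [hi0, hyj]; norm_num
          _ = ∑ j' ∈ ({j0, j} : Finset (Fin (k+1))), y i0 j' := (Finset.sum_pair hne).symm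
          _ ≤ ∑ j' ∈ Iic j, y i0 j' :=
              Finset.sum_le_sum_of_subset_of_nonneg hsub (fun a _ _ => hynn i0 a)
      rw [Finset.sum_sub_distrib, hxs, hR]
      have habs : |1/2 - ∑ j' ∈ Iic j, y i0 j'| = (∑ j' ∈ Iic j, y i0 j') - 1/2 := by
        rw [abs_sub_comm, abs_of_nonneg (by linarith)]
      rw [habs]
      linarith
    · push_neg at hrest
      have hrow0 : ∀ j : Fin (k+1), (j:ℕ) ≠ 0 → y i0 j = 0 :=
        fun j hj => (hy01 i0 j).resolve_right (hrest j hj)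
      have hi0row : ∑ j, y i0 j = 1 := by
        rw [Fin.sum_univ_succ]
        have hz : ∀ j : Fin k, y i0 j.succ = 0 :=
          fun j => hrow0 _ (by simp [Fin.val_succ])
        have h0 : (0 : Fin (k+1)) = j0 := Fin.ext (by simp [hj0def])
        simp [hz, h0, hi0]
      have htot : ∑ i, ∑ j, y i j = (k:ℝ)+1 := by
        rw [Finset.sum_comm]
        simp [hycol]
      have hpigeon : ∃ i : Fin (k+2), (i:ℕ) ≠ k+1 ∧ ∀ j, y i j = 0 := by
        by_contra hcon
        push_neg at hcon
        have hge : ∀ i : Fin (k+2), (i:ℕ) ≠ k+1 → (1:ℝ) ≤ ∑ j, y i j := by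
          intro i hi
          obtain ⟨j, hj⟩ := hcon i hi
          have h1 : y i j = 1 := (hy01 i j).resolve_left hj
          calc (1:ℝ) = y i j := h1.symm
            _ ≤ ∑ j', y i j' := Finset.single_le_sum (fun j' _ => hynn i j') (mem_univ j)
        rw [hi0last] at hi0row
        have hsplit : ∑ i, ∑ j, y i j = (∑ i : Fin (k+1), ∑ j, y i.castSucc j) + 1 := by
          rw [Fin.sum_univ_castSucc, hi0row]
        have hsum_ge : ((k:ℝ)+1) ≤ ∑ i : Fin (k+1), ∑ j, y i.castSucc j := by
          calc ((k:ℝ)+1) = ∑ _i : Fin (k+1), (1:ℝ) := by simp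
            _ ≤ _ := Finset.sum_le_sum (fun i _ => hge i.castSucc (by
                simp only [Fin.coe_castSucc]; omega))
        rw [htot] at hsplit
        linarith
      obtain ⟨i, hine, hiz⟩ := hpigeon
      refine ⟨i, Fin.last k, ?_⟩
      have hIic : Iic (Fin.last k) = (univ : Finset (Fin (k+1))) := by
        ext a; simp [Finset.mem_Iic, Fin.le_last]
      rw [hIic]
      have hsum : ∑ j, (xval k i j - y i j) = 1 - 1/(2*((k:ℝ)+1)) := by
        simp_rw [hiz, sub_zero]
        exact xval_row k i hine
      rw [hsum, hR, abs_of_nonneg (by linarith)]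
  · -- i0 is not the last row
    refine ⟨i0, j0, ?_⟩
    have hIic : Iic j0 = ({j0} : Finset (Fin (k+1))) := by
      ext a
      simp only [Finset.mem_Iic, Finset.mem_singleton, Fin.le_def, hj0def, Fin.ext_iff, Fin.val_mk]
      omega
    rw [hIic, Finset.sum_singleton]
    have hx : xval k i0 j0 = 1/(2*((k:ℝ)+1)) := by
      unfold xval
      rw [if_neg hlast, if_pos rfl]
    rw [hx, hi0, hR, abs_sub_comm, abs_of_nonneg (by linarith)]
end

section
/- For every δ > 0 there exist a positive integer n and a fractional assignment x ∈ [0,1]^{3×n} such that every integral assignment y ∈ {0,1}^{3×n} satisfying y_{ij} = 0 whenever x_{ij} = 0 admits some i ∈ [3] and t ∈ [n] with |∑_{j≤t} (x_{ij} − y_{ij})| ≥ 1 − δ. -/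
open Finset

/-- intended pick at column `k`: row 1 at odd columns, row 2 at even columns. -/
def carpoolP (k : ℕ) : Fin 3 := if k % 2 = 1 then 1 else 2

/-- the fractional assignment columns, over ℕ. -/
noncomputable def carpoolCol (ε : ℝ) (i : Fin 3) (k : ℕ) : ℝ :=
  if k = 0 then (if i = 2 then 1 - 2*ε else ε)
  else if k % 2 = 1 then (if i = 0 then 2*ε else if i = 1 then 1 - 2*ε else 0)
  else (if i = 1 then 2*ε else if i = 2 then 1 - 2*ε else 0)

lemma carpool_sum1 (ε : ℝ) (t : ℕ) :
    ∑ k ∈ Finset.range (t+1), (carpoolCol ε 1 k - (if (1 : Fin 3) = carpoolP k then (1:ℝ) else 0)) =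
      if t % 2 = 0 then ε else -ε := by
  induction t with
  | zero => rw [Finset.sum_range_one]; norm_num [carpoolCol, carpoolP, show (1:Fin 3) ≠ 2 by decide, show (0:Fin 3) ≠ 2 by decide]
  | succ t ih =>
    rw [Finset.sum_range_succ, ih]
    rcases Nat.even_or_odd t with he | ho
    · have h1 : t % 2 = 0 := Nat.even_iff.mp he
      have h2 : (t+1) % 2 = 1 := by omega
      simp [carpoolCol, carpoolP, h1, h2]
      try ring
    · have h1 : t % 2 = 1 := Nat.odd_iff.mp ho
      have h2 : (t+1) % 2 = 0 := by omega
      simp [carpoolCol, carpoolP, h1, h2]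
      try ring

lemma carpool_sum0 (ε : ℝ) (t : ℕ) :
    ∑ k ∈ Finset.range (t+1), (carpoolCol ε 0 k - (if (0 : Fin 3) = carpoolP k then (1:ℝ) else 0)) =
      ((t : ℝ) + 1 + ((t % 2 : ℕ) : ℝ)) * ε := by
  induction t with
  | zero => rw [Finset.sum_range_one]; norm_num [carpoolCol, carpoolP, show (1:Fin 3) ≠ 2 by decide, show (0:Fin 3) ≠ 2 by decide]
  | succ t ih =>
    rw [Finset.sum_range_succ, ih]
    rcases Nat.even_or_odd t with he | ho
    · have h1 : t % 2 = 0 := Nat.even_iff.mp he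
      have h2 : (t+1) % 2 = 1 := by omega
      simp [carpoolCol, carpoolP, h1, h2]
      try push_cast
      try ring
    · have h1 : t % 2 = 1 := Nat.odd_iff.mp ho
      have h2 : (t+1) % 2 = 0 := by omega
      simp [carpoolCol, carpoolP, h1, h2]
      try push_cast
      try ring

lemma carpool_uniq (Y : Fin 3 → ℕ → ℝ) (h01 : ∀ i k, Y i k = 0 ∨ Y i k = 1)
    (hsum : ∀ k, Y 0 k + Y 1 k + Y 2 k = 1) (k : ℕ) (h : Y (carpoolP k) k = 1) (i : Fin 3) :
    Y i k = if i = carpoolP k then 1 else 0 := by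
  have h0 := h01 0 k
  have h1 := h01 1 k
  have h2 := h01 2 k
  have hs := hsum k
  unfold carpoolP at h ⊢
  by_cases hk : k % 2 = 1 <;> simp [hk] at h ⊢ <;>
    rcases h0 with h0|h0 <;> rcases h1 with h1|h1 <;> rcases h2 with h2|h2 <;>
    fin_cases i <;> simp_all

lemma carpool_sum_Iic {n : ℕ} (t : Fin n) (f : Fin n → ℝ) (g : ℕ → ℝ)
    (hg : ∀ (k : ℕ) (h : k < n), g k = f ⟨k, h⟩) :
    ∑ j ∈ Iic t, f j = ∑ k ∈ Finset.range (t.1+1), g k := by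
  refine Finset.sum_bij (fun (j : Fin n) _ => (j : ℕ)) ?_ ?_ ?_ ?_
  · intro a ha
    simp only [Finset.mem_Iic] at ha
    simp only [Finset.mem_range]
    omega
  · intro a _ b _ hab
    exact Fin.val_injective hab
  · intro b hb
    simp only [Finset.mem_range] at hb
    have htn := t.isLt
    have hbn : b < n := by omega
    refine ⟨⟨b, hbn⟩, ?_, rfl⟩
    simp only [Finset.mem_Iic, Fin.le_def]
    omega
  · intro a ha
    exact (hg a.1 a.isLt).symm


/-- Lower bound for the carpooling problem: for every `δ > 0` there is a fractional
assignment `x` on 3 rows such that every integral assignment supported on the support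
of `x` incurs prefix discrepancy at least `1 - δ` somewhere. -/
theorem carpool_lower_bound (δ : ℝ) (hδ : 0 < δ) :
    ∃ n : ℕ, 0 < n ∧ ∃ x : Fin 3 → Fin n → ℝ,
      (∀ i j, 0 ≤ x i j ∧ x i j ≤ 1) ∧
      (∀ j, ∑ i, x i j = 1) ∧
      ∀ y : Fin 3 → Fin n → ℝ,
        (∀ i j, y i j = 0 ∨ y i j = 1) →
        (∀ j, ∑ i, y i j = 1) →
        (∀ i j, x i j = 0 → y i j = 0) →
        ∃ (i : Fin 3) (t : Fin n),
          |∑ j ∈ Iic t, (x i j - y i j)| ≥ 1 - δ := by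
  obtain ⟨m, hm1, hmδ⟩ : ∃ m : ℕ, 1 ≤ m ∧ 1/δ ≤ (m:ℝ) := by
    refine ⟨⌈1/δ⌉₊ + 1, by omega, ?_⟩
    calc 1/δ ≤ (⌈1/δ⌉₊ : ℝ) := Nat.le_ceil _
    _ ≤ ((⌈1/δ⌉₊ + 1 : ℕ):ℝ) := by exact_mod_cast Nat.le_succ _
  set ε : ℝ := 1/(2*(m:ℝ)+2) with hε
  have hmR : (1:ℝ) ≤ (m:ℝ) := by exact_mod_cast hm1
  have hδm : 1 ≤ δ * m := by
    rw [div_le_iff₀ hδ] at hmδ; linarith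
  have hε0 : 0 < ε := by rw [hε]; positivity
  have hεδ : ε ≤ δ := by
    rw [hε, div_le_iff₀ (by linarith : (0:ℝ) < 2*(m:ℝ)+2)]
    nlinarith
  have hε4 : ε ≤ 1/4 := by
    rw [hε]
    rw [div_le_div_iff₀ (by linarith) (by norm_num)]
    linarith
  have hkey : (2*(m:ℝ)+2) * ε = 1 := by
    rw [hε]; field_simp
  refine ⟨2*m, by omega, fun i j => carpoolCol ε i j.1, ?_, ?_, ?_⟩
  · intro i j
    dsimp only
    unfold carpoolCol
    fin_cases i <;> split_ifs <;> constructor <;> linarith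
  · intro j
    rw [Fin.sum_univ_three]
    dsimp only
    by_cases hk0 : (j:ℕ) = 0
    · norm_num [carpoolCol, hk0, show (0:Fin 3) ≠ 2 by decide, show (1:Fin 3) ≠ 2 by decide]
      try ring
    · by_cases hk1 : (j:ℕ) % 2 = 1
      · norm_num [carpoolCol, hk0, hk1, show (1:Fin 3) ≠ 0 by decide, show (2:Fin 3) ≠ 0 by decide,
          show (2:Fin 3) ≠ 1 by decide]
        try ring
      · norm_num [carpoolCol, hk0, hk1, show (0:Fin 3) ≠ 1 by decide, show (0:Fin 3) ≠ 2 by decide,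
          show (2:Fin 3) ≠ 1 by decide]
        try ring
  · intro y hy01 hysum hsupp
    set Y : Fin 3 → ℕ → ℝ :=
      fun i k => if h : k < 2*m then y i ⟨k,h⟩ else if i = carpoolP k then 1 else 0 with hYdef
    have hY01 : ∀ i k, Y i k = 0 ∨ Y i k = 1 := by
      intro i k
      rw [hYdef]
      dsimp only
      split_ifs with h h'
      · exact hy01 i ⟨k,h⟩
      · exact Or.inr rfl
      · exact Or.inl rfl
    have hYsum : ∀ k, Y 0 k + Y 1 k + Y 2 k = 1 := by
      intro k
      by_cases h : k < 2*m
      · have e : ∀ i, Y i k = y i ⟨k,h⟩ := fun i => by rw [hYdef]; exact dif_pos h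
        rw [e 0, e 1, e 2]
        have := hysum ⟨k,h⟩
        rwa [Fin.sum_univ_three] at this
      · have e : ∀ i, Y i k = if i = carpoolP k then 1 else 0 := fun i => by
          rw [hYdef]; exact dif_neg h
        rw [e 0, e 1, e 2]
        have hP : carpoolP k = 1 ∨ carpoolP k = 2 := by unfold carpoolP; split_ifs <;> simp
        rcases hP with hP | hP <;> rw [hP] <;>
          norm_num [show (0:Fin 3) ≠ 1 by decide, show (2:Fin 3) ≠ 1 by decide,
            show (0:Fin 3) ≠ 2 by decide, show (1:Fin 3) ≠ 2 by decide]
    show ∃ (i : Fin 3) (t : Fin (2*m)), |∑ j ∈ Iic t, (carpoolCol ε i j.1 - y i j)| ≥ 1 - δ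
    have hYfin : ∀ (i : Fin 3) (j : Fin (2*m)), Y i j.1 = y i j := by
      intro i j
      rw [hYdef]
      dsimp only
      rw [dif_pos j.isLt]
    have hconv : ∀ (i : Fin 3) (t : Fin (2*m)),
        ∑ j ∈ Iic t, (carpoolCol ε i j.1 - y i j)
          = ∑ k ∈ Finset.range (t.1+1), (carpoolCol ε i k - Y i k) := by
      intro i t
      refine carpool_sum_Iic t _ _ (fun k hk => ?_)
      have hYk : Y i k = y i ⟨k, hk⟩ := by rw [hYdef]; exact dif_pos hk
      rw [hYk]
    have hagree : ∀ (i : Fin 3) (T : ℕ), (∀ k, k < T → Y (carpoolP k) k = 1) →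
        ∑ k ∈ Finset.range T, (carpoolCol ε i k - Y i k)
          = ∑ k ∈ Finset.range T, (carpoolCol ε i k - (if i = carpoolP k then (1:ℝ) else 0)) := by
      intro i T hT
      refine Finset.sum_congr rfl (fun k hk => ?_)
      rw [carpool_uniq Y hY01 hYsum k (hT k (Finset.mem_range.mp hk)) i]
    have habs1 : |1 - ε| ≥ 1 - δ := by rw [abs_of_nonneg (by linarith)]; linarith
    have habs2 : |ε - 1| ≥ 1 - δ := by rw [abs_of_nonpos (by linarith)]; linarith
    by_cases hdev : ∀ j : Fin (2*m), y (carpoolP j.1) j = 1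
    · have hT : ∀ k, k < 2*m → Y (carpoolP k) k = 1 := by
        intro k hk
        have hh : Y (carpoolP k) k = y (carpoolP k) ⟨k,hk⟩ := by rw [hYdef]; exact dif_pos hk
        rw [hh]; exact hdev ⟨k,hk⟩
      have hmn : 2*m-1 < 2*m := by omega
      refine ⟨0, ⟨2*m-1, hmn⟩, ?_⟩
      rw [hconv 0 ⟨2*m-1, hmn⟩]
      rw [hagree 0 ((2*m-1)+1) (fun k hk => hT k (by omega))]
      rw [carpool_sum0 ε (2*m-1)]
      rw [(by omega : (2*m-1) % 2 = 1)]
      have hval : (((2*m-1 : ℕ):ℝ) + 1 + ((1:ℕ):ℝ)) * ε = 1 - ε := by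
        rw [Nat.cast_sub (by omega : 1 ≤ 2*m)]
        push_cast
        linear_combination hkey
      rw [hval]
      exact habs1
    · push_neg at hdev
      obtain ⟨j₁, hj₁⟩ := hdev
      have hne : (Finset.univ.filter (fun j : Fin (2*m) => y (carpoolP j.1) j ≠ 1)).Nonempty :=
        ⟨j₁, Finset.mem_filter.mpr ⟨Finset.mem_univ _, hj₁⟩⟩
      obtain ⟨j₀, hj₀mem, hj₀min⟩ :
          ∃ j₀ ∈ Finset.univ.filter (fun j : Fin (2*m) => y (carpoolP j.1) j ≠ 1),
            ∀ j' ∈ Finset.univ.filter (fun j : Fin (2*m) => y (carpoolP j.1) j ≠ 1), j₀ ≤ j' :=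
        ⟨_, Finset.min'_mem _ hne, fun j' hj' => Finset.min'_le _ _ hj'⟩
      have hj₀ : y (carpoolP j₀.1) j₀ ≠ 1 := (Finset.mem_filter.mp hj₀mem).2
      have hminY : ∀ k, k < j₀.1 → Y (carpoolP k) k = 1 := by
        intro k hk
        have hkn : k < 2*m := lt_trans hk j₀.isLt
        have hyk : y (carpoolP k) ⟨k,hkn⟩ = 1 := by
          by_contra hc
          have hmem : (⟨k,hkn⟩ : Fin (2*m)) ∈
              Finset.univ.filter (fun j : Fin (2*m) => y (carpoolP j.1) j ≠ 1) :=
            Finset.mem_filter.mpr ⟨Finset.mem_univ _, hc⟩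
          have h2 : j₀ ≤ (⟨k,hkn⟩ : Fin (2*m)) := hj₀min _ hmem
          exact absurd (show j₀.1 ≤ k from h2) (by omega)
        have hh : Y (carpoolP k) k = y (carpoolP k) ⟨k,hkn⟩ := by rw [hYdef]; exact dif_pos hkn
        rw [hh]; exact hyk
      have hsum3 : y 0 j₀ + y 1 j₀ + y 2 j₀ = 1 := by
        have := hysum j₀; rwa [Fin.sum_univ_three] at this
      by_cases hJ0 : j₀.1 = 0
      · have hP : carpoolP j₀.1 = 2 := by rw [hJ0]; simp [carpoolP]
        rw [hP] at hj₀
        have hy2 : y 2 j₀ = 0 := (hy01 2 j₀).resolve_right hj₀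
        rcases hy01 0 j₀ with h0 | h0
        · have h1 : y 1 j₀ = 1 := by linarith
          refine ⟨1, j₀, ?_⟩
          rw [hconv 1 j₀, hJ0, Finset.sum_range_one]
          have hY10 : Y 1 0 = y 1 j₀ := by
            rw [hYdef]; dsimp only; rw [dif_pos (by omega : 0 < 2*m)]
            congr 1
            exact Fin.ext hJ0.symm
          rw [hY10, h1, (by norm_num [carpoolCol, show (1:Fin 3) ≠ 2 by decide] :
            carpoolCol ε 1 0 = ε)]
          exact habs2
        · refine ⟨0, j₀, ?_⟩
          rw [hconv 0 j₀, hJ0, Finset.sum_range_one]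
          have hY00 : Y 0 0 = y 0 j₀ := by
            rw [hYdef]; dsimp only; rw [dif_pos (by omega : 0 < 2*m)]
            congr 1
            exact Fin.ext hJ0.symm
          rw [hY00, h0, (by norm_num [carpoolCol, show (0:Fin 3) ≠ 2 by decide] :
            carpoolCol ε 0 0 = ε)]
          exact habs2
      · by_cases hJodd : j₀.1 % 2 = 1
        · have hP : carpoolP j₀.1 = 1 := by unfold carpoolP; rw [if_pos hJodd]
          rw [hP] at hj₀
          have hy1 : y 1 j₀ = 0 := (hy01 1 j₀).resolve_right hj₀
          refine ⟨1, j₀, ?_⟩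
          rw [hconv 1 j₀, Finset.sum_range_succ, hagree 1 j₀.1 (fun k hk => hminY k hk)]
          have hpre := carpool_sum1 ε (j₀.1 - 1)
          rw [show j₀.1 - 1 + 1 = j₀.1 from by omega] at hpre
          rw [hpre, if_pos (by omega : (j₀.1 - 1) % 2 = 0)]
          have hcol : carpoolCol ε 1 j₀.1 = 1 - 2*ε := by
            unfold carpoolCol
            rw [if_neg hJ0, if_pos hJodd]
            norm_num [show (1:Fin 3) ≠ 0 by decide]
          have hYv : Y 1 j₀.1 = y 1 j₀ := hYfin 1 j₀
          rw [hcol, hYv, hy1, (by ring : ε + (1 - 2*ε - 0) = 1 - ε)]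
          exact habs1
        · have hP : carpoolP j₀.1 = 2 := by unfold carpoolP; rw [if_neg hJodd]
          rw [hP] at hj₀
          have hy2 : y 2 j₀ = 0 := (hy01 2 j₀).resolve_right hj₀
          have hcol0 : carpoolCol ε 0 j₀.1 = 0 := by
            unfold carpoolCol
            rw [if_neg hJ0, if_neg hJodd]
            norm_num [show (0:Fin 3) ≠ 1 by decide, show (0:Fin 3) ≠ 2 by decide]
          have hy0 : y 0 j₀ = 0 := hsupp 0 j₀ hcol0
          have hy1 : y 1 j₀ = 1 := by linarith
          refine ⟨1, j₀, ?_⟩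
          rw [hconv 1 j₀, Finset.sum_range_succ, hagree 1 j₀.1 (fun k hk => hminY k hk)]
          have hpre := carpool_sum1 ε (j₀.1 - 1)
          rw [show j₀.1 - 1 + 1 = j₀.1 from by omega] at hpre
          rw [hpre, if_neg (by omega : ¬ (j₀.1 - 1) % 2 = 0)]
          have hcol : carpoolCol ε 1 j₀.1 = 2*ε := by
            unfold carpoolCol
            rw [if_neg hJ0, if_neg hJodd]
            rw [if_pos rfl]
          have hYv : Y 1 j₀.1 = y 1 j₀ := hYfin 1 j₀
          rw [hcol, hYv, hy1, (by ring : -ε + (2*ε - 1) = ε - 1)]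
          exact habs2
end

section
/- Fix 0 < δ ≤ 1/3, let p = ⌈(1−δ)/(2δ)⌉ and n = 1 + 2p, and define x ∈ [0,1]^{3×n} by: column 1 is (δ, 0, 1−δ); for s ∈ [p], column 2s is (1−2δ, 2δ, 0) and column 2s+1 is (2δ, 0, 1−2δ). Then x is a fractional assignment, and for every integral assignment y with y_{ij}=0 whenever x_{ij}=0, there exist i ∈ [3] and t ∈ [n] with |∑_{j≤t}(x_{ij} − y_{ij})| ≥ 1 − δ. -/
open Finset

private lemma sum_ite_lt_range (N k : ℕ) (G : ℕ → ℝ) (h : k ≤ N) :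
    ∑ m ∈ Finset.range N, (if m < k then G m else 0) = ∑ m ∈ Finset.range k, G m := by
  rw [← Finset.sum_filter]
  congr 1
  ext m
  simp only [Finset.mem_filter, Finset.mem_range]
  omega

private lemma prefixT (δ : ℝ) : ∀ m : ℕ, (∑ k ∈ Finset.range m,
    (if k = 0 then δ else if Odd k then -(2*δ) else 2*δ))
    = if m = 0 then 0 else if Odd m then δ else -δ := by
  intro m
  induction m with
  | zero => simp
  | succ m ih =>
    rw [Finset.sum_range_succ, ih]
    simp only [Nat.odd_iff] at *
    rcases Nat.eq_zero_or_pos m with rfl | hm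
    · norm_num
    · have h3 : m ≠ 0 := by omega
      have h4 : m + 1 ≠ 0 := by omega
      by_cases h5 : m % 2 = 1
      · have h6 : ¬ ((m+1) % 2 = 1) := by omega
        simp only [h3, h4, h5, h6, if_true, if_false, ite_false]
        ring
      · have h6 : (m+1) % 2 = 1 := by omega
        simp only [h3, h4, h5, h6, if_true, if_false, ite_false, ite_true]
        ring

private lemma sumX (δ : ℝ) : ∀ p : ℕ, (∑ m ∈ Finset.range (1 + 2*p),
    (if m = 0 then 0 else if Odd m then 2*δ else 0)) = 2*δ*p := by
  intro p
  induction p with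
  | zero => simp
  | succ p ih =>
    have h1 : 1 + 2*(p+1) = (1 + 2*p) + 1 + 1 := by omega
    rw [h1, Finset.sum_range_succ, Finset.sum_range_succ, ih]
    have h2 : (1 + 2*p) ≠ 0 := by omega
    have h3 : Odd (1 + 2*p) := Nat.odd_iff.mpr (by omega)
    have h4 : (1 + 2*p + 1) ≠ 0 := by omega
    have h5 : ¬ Odd (1 + 2*p + 1) := by rw [Nat.odd_iff]; omega
    rw [if_neg h2, if_pos h3, if_neg h4, if_neg h5]
    push_cast
    ring

/-- The concrete carpooling lower bound construction: with `p = ⌈(1-δ)/(2δ)⌉` and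
`n = 1 + 2p`, column 1 is `(δ, 0, 1-δ)`, columns `2s` are `(1-2δ, 2δ, 0)` and columns
`2s+1` are `(2δ, 0, 1-2δ)`. This `x` is a fractional assignment, and every integral
assignment supported on its support incurs prefix discrepancy at least `1 - δ`. -/
theorem carpool_construction (δ : ℝ) (hδ0 : 0 < δ) (hδ1 : δ ≤ 1 / 3)
    (x : Fin 3 → Fin (1 + 2 * ⌈(1 - δ) / (2 * δ)⌉₊) → ℝ)
    (hx : ∀ i j, x i j =
      if (j : ℕ) = 0 then ![δ, 0, 1 - δ] i
      else if Odd (j : ℕ) then ![1 - 2 * δ, 2 * δ, 0] i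
      else ![2 * δ, 0, 1 - 2 * δ] i) :
    ((∀ i j, 0 ≤ x i j ∧ x i j ≤ 1) ∧ (∀ j, ∑ i, x i j = 1)) ∧
    ∀ y : Fin 3 → Fin (1 + 2 * ⌈(1 - δ) / (2 * δ)⌉₊) → ℝ,
      (∀ i j, y i j = 0 ∨ y i j = 1) →
      (∀ j, ∑ i, y i j = 1) →
      (∀ i j, x i j = 0 → y i j = 0) →
      ∃ i t, |∑ j ∈ Iic t, (x i j - y i j)| ≥ 1 - δ := by
  classical
  constructor
  · constructor
    · intro i j
      rw [hx i j]
      split_ifs <;> fin_cases i <;> simp <;> constructor <;> linarith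
    · intro j
      rw [Fin.sum_univ_three, hx 0 j, hx 1 j, hx 2 j]
      split_ifs <;> simp <;> ring
  · intro y hy01 hysum hsupp
    have hsum3 : ∀ j, y 0 j + y 1 j + y 2 j = 1 := by
      intro j; have := hysum j; rwa [Fin.sum_univ_three] at this
    have hy1 : ∀ j : Fin (1 + 2 * ⌈(1 - δ) / (2 * δ)⌉₊), ¬ Odd (j : ℕ) → y 1 j = 0 := by
      intro j hj
      apply hsupp
      rw [hx]
      split_ifs with h1 <;> simp
    have hy2 : ∀ j : Fin (1 + 2 * ⌈(1 - δ) / (2 * δ)⌉₊), Odd (j : ℕ) → y 2 j = 0 := by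
      intro j hj
      apply hsupp
      rw [hx]
      split_ifs with h1
      · exact absurd (h1 ▸ hj) (by decide)
      · simp
    by_cases hc : ∃ j : Fin (1 + 2 * ⌈(1 - δ) / (2 * δ)⌉₊), if Odd (j : ℕ) then y 1 j = 1 else y 0 j = 1
    · -- there is a deviation; take the first one
      set D : Finset (Fin (1 + 2 * ⌈(1 - δ) / (2 * δ)⌉₊)) :=
        univ.filter (fun j => if Odd (j : ℕ) then y 1 j = 1 else y 0 j = 1) with hD
      have hDne : D.Nonempty := by
        obtain ⟨j, hj⟩ := hc
        exact ⟨j, by simp [hD, hj]⟩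
      set j0 := D.min' hDne with hj0
      have hj0mem : (if Odd (j0 : ℕ) then y 1 j0 = 1 else y 0 j0 = 1) := by
        have := D.min'_mem hDne
        simpa [hD] using this
      have hbefore : ∀ j, j < j0 → ¬ (if Odd (j : ℕ) then y 1 j = 1 else y 0 j = 1) := by
        intro j hjlt hcontra
        exact absurd (D.min'_le j (by simp [hD, hcontra])) (not_le.mpr hjlt)
      -- value of y 0 before j0
      have hy0before : ∀ j, j < j0 → y 0 j = if Odd (j : ℕ) then 1 else 0 := by
        intro j hjlt
        have hb := hbefore j hjlt
        by_cases ho : Odd (j : ℕ)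
        · rw [if_pos ho] at hb
          rw [if_pos ho]
          have h1 : y 1 j = 0 := (hy01 1 j).resolve_right hb
          have h2 : y 2 j = 0 := hy2 j ho
          have := hsum3 j
          linarith
        · rw [if_neg ho] at hb
          rw [if_neg ho]
          exact (hy01 0 j).resolve_right hb
      -- x 0 j - y 0 j agrees with the step function for j < j0
      have hFG : ∀ j, j < j0 → x 0 j - y 0 j =
          (if (j:ℕ) = 0 then δ else if Odd (j:ℕ) then -(2*δ) else 2*δ) := by
        intro j hjlt
        rw [hx, hy0before j hjlt]
        by_cases h0 : (j:ℕ) = 0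
        · have : ¬ Odd (j:ℕ) := by rw [h0]; decide
          simp [h0, this]
        · by_cases ho : Odd (j:ℕ)
          · simp [h0, ho] <;> ring
          · simp [h0, ho] <;> ring
      -- sum over Iio j0
      have hIio : ∑ j ∈ Iio j0, (x 0 j - y 0 j)
          = if (j0:ℕ) = 0 then 0 else if Odd (j0:ℕ) then δ else -δ := by
        have e1 : Iio j0 = univ.filter (fun j : Fin (1 + 2 * ⌈(1 - δ) / (2 * δ)⌉₊) => (j:ℕ) < (j0:ℕ)) := by
          ext j; simp only [mem_Iio, mem_filter, mem_univ, true_and, Fin.lt_def]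
        rw [e1]
        rw [Finset.sum_congr rfl (fun j hj => hFG j (by
          simp only [mem_filter] at hj; exact Fin.lt_def.mpr hj.2))]
        rw [Finset.sum_filter]
        rw [Fin.sum_univ_eq_sum_range
          (fun m => if m < (j0:ℕ) then (if m = 0 then δ else if Odd m then -(2*δ) else 2*δ) else 0)]
        rw [sum_ite_lt_range _ _ _ (le_of_lt j0.isLt)]
        exact prefixT δ (j0:ℕ)
      -- total sum over Iic j0
      have hIicS : ∑ j ∈ Iic j0, (x 0 j - y 0 j)
          = (x 0 j0 - y 0 j0) + ∑ j ∈ Iio j0, (x 0 j - y 0 j) := by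
        rw [← Finset.Iio_insert, Finset.sum_insert (by simp)]
      refine ⟨0, j0, ?_⟩
      rw [hIicS, hIio]
      by_cases ho : Odd (j0:ℕ)
      · -- j0 odd : y 1 j0 = 1, y 0 j0 = 0, term 1 - 2δ, prefix δ
        rw [if_pos ho] at hj0mem
        have h0 : (j0:ℕ) ≠ 0 := by
          intro h; rw [h] at ho; exact absurd ho (by decide)
        have hy0 : y 0 j0 = 0 := by
          have := hsum3 j0
          have := hy2 j0 ho
          linarith
        rw [hx, hy0, if_neg h0, if_pos ho, if_neg h0, if_pos ho]
        simp only [Matrix.cons_val_zero]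
        rw [abs_of_nonneg (by linarith)]
        linarith
      · -- j0 even : y 0 j0 = 1
        rw [if_neg ho] at hj0mem
        rw [hx, hj0mem]
        by_cases h0 : (j0:ℕ) = 0
        · rw [if_pos h0, if_pos h0]
          simp only [Matrix.cons_val_zero]
          rw [abs_of_nonpos (by linarith)]
          linarith
        · rw [if_neg h0, if_neg ho, if_neg h0, if_neg ho]
          simp only [Matrix.cons_val_zero]
          rw [abs_of_nonpos (by linarith)]
          linarith
    · -- no deviation : y 1 ≡ 0 and row 1 accumulates 2δp ≥ 1 - δ
      push_neg at hc
      have hy1all : ∀ j, y 1 j = 0 := by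
        intro j
        by_cases ho : Odd (j:ℕ)
        · have := hc j; rw [if_pos ho] at this
          exact (hy01 1 j).resolve_right this
        · exact hy1 j ho
      have hNpos : 2 * ⌈(1 - δ) / (2 * δ)⌉₊ < 1 + 2 * ⌈(1 - δ) / (2 * δ)⌉₊ := by omega
      refine ⟨1, ⟨2*⌈(1 - δ) / (2 * δ)⌉₊, hNpos⟩, ?_⟩
      have hIicU : Iic (⟨2*⌈(1 - δ) / (2 * δ)⌉₊, hNpos⟩ : Fin (1 + 2*⌈(1 - δ) / (2 * δ)⌉₊)) = univ := by
        ext j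
        simp only [mem_Iic, mem_univ, iff_true, Fin.le_def]
        have := j.isLt; omega
      rw [hIicU]
      have hterm : ∀ j : Fin (1 + 2*⌈(1 - δ) / (2 * δ)⌉₊), x 1 j - y 1 j =
          (if (j:ℕ) = 0 then (0:ℝ) else if Odd (j:ℕ) then 2*δ else 0) := by
        intro j
        rw [hx, hy1all]
        split_ifs <;> simp
      have hsum : (∑ j : Fin (1 + 2*⌈(1 - δ) / (2 * δ)⌉₊), (x 1 j - y 1 j))
          = ∑ m ∈ Finset.range (1 + 2*⌈(1 - δ) / (2 * δ)⌉₊),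
            (if m = 0 then (0:ℝ) else if Odd m then 2*δ else 0) := by
        rw [← Fin.sum_univ_eq_sum_range
          (fun m => if m = 0 then (0:ℝ) else if Odd m then 2*δ else 0)]
        exact Finset.sum_congr rfl (fun j _ => hterm j)
      rw [hsum, sumX]
      have hple : (1 - δ) / (2*δ) ≤ ((⌈(1 - δ) / (2 * δ)⌉₊ : ℕ):ℝ) := Nat.le_ceil _
      rw [div_le_iff₀ (by linarith)] at hple
      rw [abs_of_nonneg (by positivity)]
      linarith
end

section
/- Given d ∈ ℝ_{>0}^n, a vector a ∈ [n]^m, and a fractional assignment x ∈ [0,1]^{m×n} with x_{ij} = 0 for all j < a_i, there exists an integral assignment y ∈ {0,1}^{m×n} with y_{ij} = 0 for all j < a_i, and |∑_{j≤t} d_j (x_{ij} − y_{ij})| ≤ (1 − 1/(2m−2)) · max_{j∈[n]} d_j for all i ∈ [m] and t ∈ [n]. -/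
open Finset

set_option linter.unusedSectionVars false

namespace WCO
open scoped Classical

variable {m n : ℕ}

noncomputable def wt (d : Fin n → ℝ) (t : ℕ) : ℝ := if h : t < n then d ⟨t, h⟩ else 0

noncomputable def xt (x : Fin m → Fin n → ℝ) (i : Fin m) (t : ℕ) : ℝ :=
  if h : t < n then x i ⟨t, h⟩ else 0

variable (d : Fin n → ℝ) (a : Fin m → Fin n) (x : Fin m → Fin n → ℝ) (B : ℝ)

noncomputable def allowedSet (e : Fin m → ℝ) (t : ℕ) : Finset (Fin m) :=
  univ.filter (fun i => ((a i : ℕ) ≤ t ∧ wt d t - B ≤ e i + wt d t * xt x i t))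

noncomputable def ddl (e : Fin m → ℝ) (t : ℕ) (i : Fin m) : ℕ :=
  sInf ({T | t ≤ T ∧ T < n ∧ B < e i + ∑ s ∈ Finset.Icc t T, wt d s * xt x i s} ∪ {n})

noncomputable def pick [NeZero m] (e : Fin m → ℝ) (t : ℕ) : Fin m :=
  if h : (allowedSet d a x B e t).Nonempty then
    Classical.choose (Finset.exists_min_image _ (ddl d x B e t) h)
  else default

noncomputable def ES [NeZero m] : ℕ → Fin m → ℝ
  | 0 => 0
  | (t+1) => fun i => ES t i + wt d t * xt x i t -
      (if pick d a x B (ES t) t = i then wt d t else 0)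

noncomputable def ch [NeZero m] (t : ℕ) : Fin m := pick d a x B (ES d a x B t) t

variable [NeZero m]

lemma ES_succ (t : ℕ) (i : Fin m) :
    ES d a x B (t+1) i = ES d a x B t i + wt d t * xt x i t -
      (if ch d a x B t = i then wt d t else 0) := rfl

lemma pick_mem {e : Fin m → ℝ} {t : ℕ} (h : (allowedSet d a x B e t).Nonempty) :
    pick d a x B e t ∈ allowedSet d a x B e t := by
  rw [pick, dif_pos h]
  exact (Classical.choose_spec (Finset.exists_min_image _ (ddl d x B e t) h)).1

lemma pick_min {e : Fin m → ℝ} {t : ℕ} (h : (allowedSet d a x B e t).Nonempty)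
    {z : Fin m} (hz : z ∈ allowedSet d a x B e t) :
    ddl d x B e t (pick d a x B e t) ≤ ddl d x B e t z := by
  rw [pick, dif_pos h]
  exact (Classical.choose_spec (Finset.exists_min_image _ (ddl d x B e t) h)).2 z hz

section Facts

variable (hd : ∀ j, 0 < d j) (hx01 : ∀ i j, 0 ≤ x i j ∧ x i j ≤ 1)
  (hxcol : ∀ j, ∑ i, x i j = 1) (hxa : ∀ i j, j < a i → x i j = 0)
  (hB0 : 0 ≤ B) (hm : 1 < m)
  (hBall : ∀ t : ℕ, ((m : ℝ) - 1) * wt d t ≤ (m : ℝ) * B)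

include hd in
lemma wt_nonneg (t : ℕ) : 0 ≤ wt d t := by
  unfold wt; split
  · exact (hd _).le
  · rfl

include hd in
lemma wt_pos {t : ℕ} (h : t < n) : 0 < wt d t := by
  unfold wt; rw [dif_pos h]; exact hd _

include hx01 in
lemma xt_nonneg (i : Fin m) (t : ℕ) : 0 ≤ xt x i t := by
  unfold xt; split
  · exact (hx01 _ _).1
  · rfl

include hxa in
lemma xt_closed {i : Fin m} {t : ℕ} (h : t < (a i : ℕ)) : xt x i t = 0 := by
  unfold xt
  split
  · rename_i hn'
    exact hxa i ⟨t, hn'⟩ (by simpa [Fin.lt_def] using h)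
  · rfl

include hxcol in
lemma xt_colsum {t : ℕ} (h : t < n) : ∑ i, xt x i t = 1 := by
  unfold xt
  simp only [dif_pos h]
  exact hxcol _

lemma wt_junk {t : ℕ} (h : ¬ t < n) : wt d t = 0 := by unfold wt; rw [dif_neg h]

include hd hx01 hxcol hxa hB0 hm hBall in
lemma allowed_nonempty {t : ℕ} (ht : t < n) {e : Fin m → ℝ}
    (hclosed : ∀ i, t < (a i : ℕ) → e i = 0) (hsum : ∑ i, e i = 0) :
    (allowedSet d a x B e t).Nonempty := by
  set w := wt d t with hw
  have hwpos : 0 < w := wt_pos d hd ht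
  set O : Finset (Fin m) := univ.filter (fun i => (a i : ℕ) ≤ t) with hO
  have hOne : O.Nonempty := by
    by_contra hemp
    rw [Finset.not_nonempty_iff_eq_empty, Finset.filter_eq_empty_iff] at hemp
    have hall : ∀ i : Fin m, t < (a i : ℕ) := by
      intro i
      have := hemp (Finset.mem_univ i)
      omega
    have hzz : ∑ i, xt x i t = 0 :=
      Finset.sum_eq_zero (fun i _ => xt_closed a x hxa (hall i))
    rw [xt_colsum x hxcol ht] at hzz
    norm_num at hzz
  have hxzeroO : ∀ i ∈ univ \ O, xt x i t = 0 := by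
    intro i hi
    simp only [hO, Finset.mem_sdiff, Finset.mem_filter, Finset.mem_univ, true_and] at hi
    exact xt_closed a x hxa (Nat.lt_of_not_le hi)
  have hezeroO : ∀ i ∈ univ \ O, e i = 0 := by
    intro i hi
    simp only [hO, Finset.mem_sdiff, Finset.mem_filter, Finset.mem_univ, true_and] at hi
    exact hclosed i (Nat.lt_of_not_le hi)
  have hsumO : ∑ i ∈ O, (e i + w * xt x i t) = w := by
    have h1 : ∑ i ∈ O, e i = 0 := by
      have hs := Finset.sum_sdiff (Finset.subset_univ O) (f := e)
      rw [Finset.sum_eq_zero hezeroO, zero_add] at hs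
      rw [hs, hsum]
    have h2 : ∑ i ∈ O, xt x i t = 1 := by
      have hs := Finset.sum_sdiff (Finset.subset_univ O) (f := fun i => xt x i t)
      rw [Finset.sum_eq_zero hxzeroO, zero_add] at hs
      rw [hs, xt_colsum x hxcol ht]
    rw [Finset.sum_add_distrib, h1, ← Finset.mul_sum, h2]
    ring
  by_contra hne
  rw [Finset.not_nonempty_iff_eq_empty] at hne
  rw [allowedSet, Finset.filter_eq_empty_iff] at hne
  have hvlt : ∀ i ∈ O, e i + w * xt x i t < w - B := by
    intro i hi
    simp only [hO, Finset.mem_filter, Finset.mem_univ, true_and] at hi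
    have hni := hne (Finset.mem_univ i)
    by_contra hcon
    push_neg at hcon
    rw [hw] at hcon
    exact hni ⟨hi, hcon⟩
  have hlt : w < (O.card : ℝ) * (w - B) := by
    calc w = ∑ i ∈ O, (e i + w * xt x i t) := hsumO.symm
    _ < ∑ _i ∈ O, (w - B) := Finset.sum_lt_sum_of_nonempty hOne hvlt
    _ = (O.card : ℝ) * (w - B) := by rw [Finset.sum_const, nsmul_eq_mul]
  have hk1 : (1 : ℝ) ≤ (O.card : ℝ) := by
    exact_mod_cast Nat.one_le_iff_ne_zero.mpr (Finset.card_ne_zero_of_mem hOne.choose_spec)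
  have hkm : (O.card : ℝ) ≤ (m : ℝ) := by
    exact_mod_cast (Finset.card_le_card (Finset.subset_univ O)).trans_eq (Finset.card_univ.trans (Fintype.card_fin m))
  have hmw := hBall t
  rw [← hw] at hmw
  nlinarith [hwpos, hB0, hk1, hkm, hmw, hlt]

include hd hx01 hxcol hxa hB0 hm hBall in
lemma invariant : ∀ t : ℕ,
    (∀ i, t ≤ (a i : ℕ) → ES d a x B t i = 0) ∧
    (∀ i, -B ≤ ES d a x B t i) ∧
    (∑ i, ES d a x B t i = 0) ∧
    (t < n → (allowedSet d a x B (ES d a x B t) t).Nonempty) := by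
  intro t
  induction t with
  | zero =>
    refine ⟨fun i _ => rfl, fun i => by simpa [ES] using hB0, by simp [ES], fun h0 => ?_⟩
    exact allowed_nonempty d a x B hd hx01 hxcol hxa hB0 hm hBall h0
      (fun i _ => rfl) (by simp [ES])
  | succ t ih =>
    obtain ⟨ihz, ihlb, ihsum, ihne⟩ := ih
    by_cases htn : t < n
    · have hne := ihne htn
      have hc : ch d a x B t ∈ allowedSet d a x B (ES d a x B t) t := pick_mem d a x B hne
      rw [allowedSet, Finset.mem_filter] at hc
      obtain ⟨-, hcopen, hcval⟩ := hc
      have hz' : ∀ i, t + 1 ≤ (a i : ℕ) → ES d a x B (t+1) i = 0 := by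
        intro i hi
        rw [ES_succ]
        have h1 : xt x i t = 0 := xt_closed a x hxa (by omega)
        have h2 : ch d a x B t ≠ i := by
          intro hcc; rw [hcc] at hcopen; omega
        rw [if_neg h2, h1, ihz i (by omega)]
        ring
      have hlb' : ∀ i, -B ≤ ES d a x B (t+1) i := by
        intro i
        rw [ES_succ]
        by_cases hci : ch d a x B t = i
        · rw [if_pos hci]
          have h := hcval
          rw [hci] at h
          linarith
        · rw [if_neg hci]
          have := mul_nonneg (wt_nonneg d hd t) (xt_nonneg x hx01 i t)
          linarith [ihlb i]
      have hsum' : ∑ i, ES d a x B (t+1) i = 0 := by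
        have : ∑ i, ES d a x B (t+1) i
            = ∑ i, ES d a x B t i + wt d t * ∑ i, xt x i t
              - ∑ i, (if ch d a x B t = i then wt d t else 0) := by
          rw [Finset.mul_sum, ← Finset.sum_add_distrib, ← Finset.sum_sub_distrib]
          rfl
        rw [this, ihsum, xt_colsum x hxcol htn]
        simp
      refine ⟨hz', hlb', hsum', fun h1n => ?_⟩
      exact allowed_nonempty d a x B hd hx01 hxcol hxa hB0 hm hBall h1n
        (fun i hi => hz' i (le_of_lt hi)) hsum'
    · have hES : ∀ i, ES d a x B (t+1) i = ES d a x B t i := by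
        intro i
        rw [ES_succ, wt_junk d htn]
        simp
      exact ⟨fun i hi => (hES i).trans (ihz i (by omega)),
        fun i => (hES i) ▸ ihlb i,
        by rw [Finset.sum_congr rfl (fun i _ => hES i)]; exact ihsum,
        fun hcon => absurd hcon (by omega)⟩

end Facts

/-- horizon-T potential -/
noncomputable def gq [NeZero m] (T : ℕ) (i : Fin m) (t : ℕ) : ℝ :=
  ES d a x B t i + ∑ s ∈ Finset.Ico t (T+1), wt d s * xt x i s

section GQ
variable (hd : ∀ j, 0 < d j) (hx01 : ∀ i j, 0 ≤ x i j ∧ x i j ≤ 1)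

lemma gq_top (T : ℕ) (i : Fin m) : gq d a x B T i (T+1) = ES d a x B (T+1) i := by
  simp [gq]

lemma gq_step {T t : ℕ} (ht : t ≤ T) (i : Fin m) :
    gq d a x B T i (t+1) = gq d a x B T i t - (if ch d a x B t = i then wt d t else 0) := by
  have hsplit : ∑ s ∈ Finset.Ico t (T+1), wt d s * xt x i s
      = wt d t * xt x i t + ∑ s ∈ Finset.Ico (t+1) (T+1), wt d s * xt x i s :=
    Finset.sum_eq_sum_Ico_succ_bot (by omega) _
  simp only [gq, ES_succ, hsplit]
  ring

include hd hx01 in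
lemma gq_mono {T : ℕ} (i : Fin m) {t1 t2 : ℕ} (h12 : t1 ≤ t2) (h2 : t2 ≤ T+1) :
    gq d a x B T i t2 ≤ gq d a x B T i t1 := by
  induction t2, h12 using Nat.le_induction with
  | base => exact le_refl _
  | succ t2 h12' ih =>
    have hstep := gq_step d a x B (show t2 ≤ T by omega) i
    have hite : (0:ℝ) ≤ (if ch d a x B t2 = i then wt d t2 else 0) := by
      split
      · exact wt_nonneg d hd t2
      · exact le_refl _
    have := ih (by omega)
    rw [hstep]
    linarith

lemma gq_const {T : ℕ} (i : Fin m) {t1 t2 : ℕ} (h12 : t1 ≤ t2) (h2 : t2 ≤ T+1)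
    (hns : ∀ s, t1 ≤ s → s < t2 → ch d a x B s ≠ i) :
    gq d a x B T i t2 = gq d a x B T i t1 := by
  induction t2, h12 using Nat.le_induction with
  | base => rfl
  | succ t2 h12' ih =>
    have hstep := gq_step d a x B (show t2 ≤ T by omega) i
    rw [hstep, if_neg (hns t2 (by omega) (by omega)), sub_zero]
    exact ih (by omega) (fun s hs1 hs2 => hns s hs1 (by omega))

end GQ

section DK
variable (hd : ∀ j, 0 < d j) (hx01 : ∀ i j, 0 ≤ x i j ∧ x i j ≤ 1)

include hd hx01 in
/-- if the served row is undoomed for horizon T, every allowed row is undoomed -/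
lemma doomkey {T t : ℕ} (hTn : T < n) (ht : t ≤ T) {z : Fin m}
    (hz : z ∈ allowedSet d a x B (ES d a x B t) t)
    (hgz : B < gq d a x B T z t) :
    B < gq d a x B T (ch d a x B t) t := by
  have hne : (allowedSet d a x B (ES d a x B t) t).Nonempty := ⟨z, hz⟩
  have hIccIco : ∀ (i : Fin m), ∑ s ∈ Finset.Icc t T, wt d s * xt x i s
      = ∑ s ∈ Finset.Ico t (T+1), wt d s * xt x i s := by
    intro i
    rw [Finset.Ico_add_one_right_eq_Icc]
  have hTmem : T ∈ ({T' | t ≤ T' ∧ T' < n ∧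
      B < ES d a x B t z + ∑ s ∈ Finset.Icc t T', wt d s * xt x z s} ∪ {n}) := by
    left
    refine ⟨ht, hTn, ?_⟩
    rw [hIccIco z]
    exact hgz
  have hd1 : ddl d x B (ES d a x B t) t z ≤ T := Nat.sInf_le hTmem
  have hd2 : ddl d x B (ES d a x B t) t (ch d a x B t) ≤ T :=
    le_trans (pick_min d a x B hne hz) hd1
  have hmem : ddl d x B (ES d a x B t) t (ch d a x B t) ∈
      ({T' | t ≤ T' ∧ T' < n ∧
        B < ES d a x B t (ch d a x B t) + ∑ s ∈ Finset.Icc t T', wt d s * xt x (ch d a x B t) s} ∪ {n}) :=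
    Nat.sInf_mem ⟨n, Or.inr rfl⟩
  rcases hmem with hL | hR
  · obtain ⟨htT', -, hB'⟩ := hL
    have hsub : Finset.Icc t (ddl d x B (ES d a x B t) t (ch d a x B t)) ⊆ Finset.Icc t T := by
      apply Finset.Icc_subset_Icc_right hd2
    have hmonos : ∑ s ∈ Finset.Icc t (ddl d x B (ES d a x B t) t (ch d a x B t)),
          wt d s * xt x (ch d a x B t) s
        ≤ ∑ s ∈ Finset.Icc t T, wt d s * xt x (ch d a x B t) s := by
      apply Finset.sum_le_sum_of_subset_of_nonneg hsub
      intro s _ _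
      exact mul_nonneg (wt_nonneg d hd s) (xt_nonneg x hx01 _ s)
    have : B < ES d a x B t (ch d a x B t) + ∑ s ∈ Finset.Icc t T, wt d s * xt x (ch d a x B t) s := by
      linarith
    rw [hIccIco] at this
    exact this
  · simp only [Set.mem_singleton_iff] at hR
    omega

end DK

section NV
variable (D : ℝ)
variable (hd : ∀ j, 0 < d j) (hx01 : ∀ i j, 0 ≤ x i j ∧ x i j ≤ 1)
  (hxcol : ∀ j, ∑ i, x i j = 1) (hxa : ∀ i j, j < a i → x i j = 0)
  (hB0 : 0 ≤ B) (hm : 1 < m)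
  (hBall : ∀ t : ℕ, ((m : ℝ) - 1) * wt d t ≤ (m : ℝ) * B)
  (hwD : ∀ t : ℕ, wt d t ≤ D) (hBD : B ≤ D)
  (hBeq : (2 * (m:ℝ) - 3) * (D - B) = B)

include hd hx01 hxcol hxa hB0 hm hBall hwD hBD hBeq in
lemma no_violation {T : ℕ} (hTn : T < n) (r : Fin m) : ES d a x B (T+1) r ≤ B := by
  by_contra hviol
  push_neg at hviol
  have hinv := invariant d a x B hd hx01 hxcol hxa hB0 hm hBall
  have hm2 : (2:ℝ) ≤ (m:ℝ) := by exact_mod_cast hm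
  have hDB0 : 0 ≤ D - B := by linarith
  have hgr : ∀ t, t ≤ T+1 → B < gq d a x B T r t := by
    intro t ht
    have h1 : gq d a x B T r (T+1) ≤ gq d a x B T r t :=
      gq_mono d a x B hd hx01 r ht le_rfl
    rw [gq_top] at h1; linarith
  -- generic last-service bound
  have hlastserve : ∀ (t0 : ℕ),
      (∀ t, t0 ≤ t → t ≤ T → B < gq d a x B T (ch d a x B t) t) →
      ∀ i : Fin m, (∃ t, t0 ≤ t ∧ t ≤ T ∧ ch d a x B t = i) →
      B - D ≤ ES d a x B (T+1) i := by
    intro t0 hdoom i hex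
    have hSine : ((Finset.Icc t0 T).filter (fun t => ch d a x B t = i)).Nonempty := by
      obtain ⟨t, h1, h2, h3⟩ := hex
      exact ⟨t, by simp [Finset.mem_filter, Finset.mem_Icc, h1, h2, h3]⟩
    set tm := ((Finset.Icc t0 T).filter (fun t => ch d a x B t = i)).max' hSine with htm
    have htmmem := ((Finset.Icc t0 T).filter (fun t => ch d a x B t = i)).max'_mem hSine
    rw [Finset.mem_filter, Finset.mem_Icc] at htmmem
    obtain ⟨⟨htm0, htmT⟩, htmc⟩ := htmmem
    have hmax : ∀ s, tm < s → s ≤ T → ch d a x B s ≠ i := by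
      intro s hs1 hs2 hcs
      have : s ∈ (Finset.Icc t0 T).filter (fun t => ch d a x B t = i) := by
        simp [Finset.mem_filter, Finset.mem_Icc, hcs]
        omega
      have := Finset.le_max' _ s this
      omega
    have h1 : gq d a x B T i (T+1) = gq d a x B T i (tm+1) :=
      gq_const d a x B i (by omega) le_rfl (fun s hs1 hs2 => hmax s (by omega) (by omega))
    have h2 : gq d a x B T i (tm+1) = gq d a x B T i tm - wt d tm := by
      rw [gq_step d a x B (show tm ≤ T by omega) i, if_pos htmc]
    have h3 : B < gq d a x B T i tm := htmc ▸ hdoom tm htm0 htmT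
    have h4 := hwD tm
    have h5 := gq_top d a x B T i
    linarith
  by_cases hU : ∃ t, t ≤ T ∧ gq d a x B T (ch d a x B t) t ≤ B
  · -- CASE A : there is an undoomed service; ℓ = the last one
    obtain ⟨t₁, ht₁⟩ := hU
    have hUSne : ((Finset.Iic T).filter
        (fun t => gq d a x B T (ch d a x B t) t ≤ B)).Nonempty :=
      ⟨t₁, by simp [Finset.mem_filter, Finset.mem_Iic, ht₁.1, ht₁.2]⟩
    set ℓ := ((Finset.Iic T).filter (fun t => gq d a x B T (ch d a x B t) t ≤ B)).max' hUSne
      with hldef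
    have hlmem := ((Finset.Iic T).filter
        (fun t => gq d a x B T (ch d a x B t) t ≤ B)).max'_mem hUSne
    rw [Finset.mem_filter, Finset.mem_Iic] at hlmem
    obtain ⟨hlT, hu⟩ := hlmem
    have hafter : ∀ t, ℓ < t → t ≤ T → B < gq d a x B T (ch d a x B t) t := by
      intro t h1 h2
      by_contra hcon
      push_neg at hcon
      have : t ∈ (Finset.Iic T).filter (fun t => gq d a x B T (ch d a x B t) t ≤ B) := by
        simp [Finset.mem_filter, Finset.mem_Iic, h2, hcon]
      have := Finset.le_max' _ t this
      omega
    have hln : ℓ < n := by omega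
    have hwl : 0 < wt d ℓ := wt_pos d hd hln
    have hpr : ch d a x B ℓ ≠ r := by
      intro h
      have := hgr ℓ (by omega)
      rw [← h] at this
      linarith
    have hundoomed : ∀ z : Fin m, B < gq d a x B T z ℓ →
        z ∉ allowedSet d a x B (ES d a x B ℓ) ℓ := by
      intro z hgz hz
      exact absurd (doomkey d a x B hd hx01 hTn hlT hz hgz) (not_lt.2 hu)
    have hvbound : ∀ z : Fin m, B < gq d a x B T z ℓ →
        ES d a x B ℓ z + wt d ℓ * xt x z ℓ ≤ D - B := by
      intro z hgz
      have hz := hundoomed z hgz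
      rw [allowedSet, Finset.mem_filter] at hz
      push_neg at hz
      have hz' := hz (Finset.mem_univ z)
      by_cases hop : (a z : ℕ) ≤ ℓ
      · have h1 := hz' hop
        have := hwD ℓ
        linarith
      · have h0 : ES d a x B ℓ z = 0 := (hinv ℓ).1 z (by omega)
        have hx0 : xt x z ℓ = 0 := xt_closed a x hxa (by omega)
        rw [h0, hx0]
        simpa using hDB0
    have hvsum : ∑ i, (ES d a x B ℓ i + wt d ℓ * xt x i ℓ) = wt d ℓ := by
      rw [Finset.sum_add_distrib, (hinv ℓ).2.2.1, ← Finset.mul_sum,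
        xt_colsum x hxcol hln]
      ring
    -- Y : rows served after ℓ
    set Y := univ.filter (fun i : Fin m => ∃ t, ℓ < t ∧ t ≤ T ∧ ch d a x B t = i) with hYdef
    have hpY : ch d a x B ℓ ∉ Y := by
      intro hp
      rw [hYdef, Finset.mem_filter] at hp
      obtain ⟨-, t, h1, h2, h3⟩ := hp
      have hd1 : B < gq d a x B T (ch d a x B ℓ) t := by
        rw [← h3]; exact hafter t h1 h2
      have hd2 : gq d a x B T (ch d a x B ℓ) t ≤ gq d a x B T (ch d a x B ℓ) (ℓ+1) :=
        gq_mono d a x B hd hx01 _ (by omega) (by omega)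
      have hd3 : gq d a x B T (ch d a x B ℓ) (ℓ+1)
          = gq d a x B T (ch d a x B ℓ) ℓ - wt d ℓ := by
        rw [gq_step d a x B (show ℓ ≤ T from hlT), if_pos rfl]
      linarith
    have hYe : ∀ i ∈ Y, B - D ≤ ES d a x B (T+1) i := by
      intro i hi
      rw [hYdef, Finset.mem_filter] at hi
      obtain ⟨-, t, h1, h2, h3⟩ := hi
      exact hlastserve (ℓ+1) (fun t' ht1 ht2 => hafter t' (by omega) ht2) i
        ⟨t, by omega, h2, h3⟩
    have hYg : ∀ i ∈ Y, B < gq d a x B T i ℓ := by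
      intro i hi
      rw [hYdef, Finset.mem_filter] at hi
      obtain ⟨-, t, h1, h2, h3⟩ := hi
      have hd1 : B < gq d a x B T i t := by rw [← h3]; exact hafter t h1 h2
      have hd2 : gq d a x B T i t ≤ gq d a x B T i ℓ :=
        gq_mono d a x B hd hx01 i (by omega) (by omega)
      linarith
    have hsingle : ∀ i : Fin m,
        ES d a x B ℓ i + wt d ℓ * xt x i ℓ ≤ gq d a x B T i ℓ := by
      intro i
      have : wt d ℓ * xt x i ℓ ≤ ∑ s ∈ Finset.Ico ℓ (T+1), wt d s * xt x i s :=
        Finset.single_le_sum (f := fun s => wt d s * xt x i s)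
          (fun s _ => mul_nonneg (wt_nonneg d hd s) (xt_nonneg x hx01 i s))
          (Finset.mem_Ico.2 ⟨le_rfl, by omega⟩)
      rw [gq]
      linarith
    have hXe : ∀ i, i ∉ Y → i ≠ ch d a x B ℓ →
        ES d a x B ℓ i + wt d ℓ * xt x i ℓ ≤ ES d a x B (T+1) i := by
      intro i hiY hip
      have hns : ∀ s, ℓ ≤ s → s < T+1 → ch d a x B s ≠ i := by
        intro s hs1 hs2 hcs
        rcases eq_or_lt_of_le hs1 with h | h
        · exact hip (by rw [← hcs, h])
        · refine absurd ?_ hiY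
          rw [hYdef, Finset.mem_filter]
          exact ⟨Finset.mem_univ i, s, h, by omega, hcs⟩
      have h1 : gq d a x B T i (T+1) = gq d a x B T i ℓ :=
        gq_const d a x B i (by omega) le_rfl hns
      have h2 := gq_top d a x B T i
      have h3 := hsingle i
      linarith
    have hpe : ES d a x B ℓ (ch d a x B ℓ) + wt d ℓ * xt x (ch d a x B ℓ) ℓ - wt d ℓ
        ≤ ES d a x B (T+1) (ch d a x B ℓ) := by
      have hns : ∀ s, ℓ+1 ≤ s → s < T+1 → ch d a x B s ≠ ch d a x B ℓ := by
        intro s hs1 hs2 hcs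
        refine absurd ?_ hpY
        rw [hYdef, Finset.mem_filter]
        exact ⟨Finset.mem_univ _, s, by omega, by omega, hcs⟩
      have h1 : gq d a x B T (ch d a x B ℓ) (T+1) = gq d a x B T (ch d a x B ℓ) (ℓ+1) :=
        gq_const d a x B _ (by omega) le_rfl hns
      have h2 : gq d a x B T (ch d a x B ℓ) (ℓ+1)
          = gq d a x B T (ch d a x B ℓ) ℓ - wt d ℓ := by
        rw [gq_step d a x B (show ℓ ≤ T from hlT), if_pos rfl]
      have h3 := gq_top d a x B T (ch d a x B ℓ)
      have h4 := hsingle (ch d a x B ℓ)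
      linarith
    -- assemble
    have hsum0 : ES d a x B (T+1) r + ∑ i ∈ univ.erase r, ES d a x B (T+1) i = 0 := by
      rw [Finset.add_sum_erase univ _ (Finset.mem_univ r)]
      exact (hinv (T+1)).2.2.1
    have hsplit2 : ∑ i ∈ (univ.erase r).filter (· ∈ Y), ES d a x B (T+1) i
        + ∑ i ∈ (univ.erase r).filter (· ∉ Y), ES d a x B (T+1) i
        = ∑ i ∈ univ.erase r, ES d a x B (T+1) i :=
      Finset.sum_filter_add_sum_filter_not _ _ _
    set k := ((univ.erase r).filter (· ∈ Y)).card with hk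
    have hA1sum : (k:ℝ) * (B - D) ≤ ∑ i ∈ (univ.erase r).filter (· ∈ Y), ES d a x B (T+1) i := by
      have := Finset.card_nsmul_le_sum ((univ.erase r).filter (· ∈ Y))
        (fun i => ES d a x B (T+1) i) (B - D)
        (fun i hi => hYe i (Finset.mem_filter.1 hi).2)
      rwa [nsmul_eq_mul] at this
    have hkm : k ≤ m - 2 := by
      have hsub : (univ.erase r).filter (· ∈ Y) ⊆ (univ.erase r).erase (ch d a x B ℓ) := by
        intro i hi
        rw [Finset.mem_filter] at hi
        refine Finset.mem_erase.2 ⟨?_, hi.1⟩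
        intro h
        exact hpY (h ▸ hi.2)
      have hc1 := Finset.card_le_card hsub
      have hmem1 : ch d a x B ℓ ∈ univ.erase r := Finset.mem_erase.2 ⟨hpr, Finset.mem_univ _⟩
      rw [Finset.card_erase_of_mem hmem1, Finset.card_erase_of_mem (Finset.mem_univ r),
        Finset.card_univ, Fintype.card_fin] at hc1
      omega
    have hpA2 : ch d a x B ℓ ∈ (univ.erase r).filter (· ∉ Y) :=
      Finset.mem_filter.2 ⟨Finset.mem_erase.2 ⟨hpr, Finset.mem_univ _⟩, hpY⟩
    have hA2sum : ∑ i ∈ (univ.erase r).filter (· ∉ Y),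
          (ES d a x B ℓ i + wt d ℓ * xt x i ℓ) - wt d ℓ
        ≤ ∑ i ∈ (univ.erase r).filter (· ∉ Y), ES d a x B (T+1) i := by
      have hper : ∀ i ∈ (univ.erase r).filter (· ∉ Y),
          (ES d a x B ℓ i + wt d ℓ * xt x i ℓ)
            - (if i = ch d a x B ℓ then wt d ℓ else 0) ≤ ES d a x B (T+1) i := by
        intro i hi
        rw [Finset.mem_filter, Finset.mem_erase] at hi
        by_cases hip : i = ch d a x B ℓ
        · rw [if_pos hip, hip]
          exact hpe
        · rw [if_neg hip, sub_zero]
          exact hXe i hi.2 hip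
      have hsum := Finset.sum_le_sum hper
      rw [Finset.sum_sub_distrib, Finset.sum_ite_eq' ((univ.erase r).filter (· ∉ Y))
        (ch d a x B ℓ) (fun _ => wt d ℓ), if_pos hpA2] at hsum
      exact hsum
    have hA2v : ∑ i ∈ (univ.erase r).filter (· ∉ Y), (ES d a x B ℓ i + wt d ℓ * xt x i ℓ)
        = wt d ℓ - ∑ i ∈ insert r Y, (ES d a x B ℓ i + wt d ℓ * xt x i ℓ) := by
      have hA2c : (univ.erase r).filter (· ∉ Y) = univ \ insert r Y := by
        ext i
        simp only [Finset.mem_filter, Finset.mem_erase, Finset.mem_sdiff,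
          Finset.mem_insert, Finset.mem_univ, true_and]
        tauto
      rw [hA2c, Finset.sum_sdiff_eq_sub (Finset.subset_univ _), hvsum]
    have hInsv : ∑ i ∈ insert r Y, (ES d a x B ℓ i + wt d ℓ * xt x i ℓ)
        ≤ ((insert r Y).card : ℝ) * (D - B) := by
      have := Finset.sum_le_card_nsmul (insert r Y)
        (fun i => ES d a x B ℓ i + wt d ℓ * xt x i ℓ) (D - B) ?hb
      · rwa [nsmul_eq_mul] at this
      case hb =>
        intro i hi
        rcases Finset.mem_insert.1 hi with h | h
        · exact h ▸ hvbound r (hgr ℓ (by omega))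
        · exact hvbound i (hYg i h)
    have hcardins : (insert r Y).card ≤ k + 1 := by
      have he1 : insert r Y = insert r (Y.erase r) := by
        ext i
        simp only [Finset.mem_insert, Finset.mem_erase]
        tauto
      have he2 : (univ.erase r).filter (· ∈ Y) = Y.erase r := by
        ext i
        simp only [Finset.mem_filter, Finset.mem_erase, Finset.mem_univ, true_and]
        tauto
      rw [he1, Finset.card_insert_of_notMem (Finset.notMem_erase r Y), hk, he2]
    -- final arithmetic
    have hkR : (k:ℝ) ≤ (m:ℝ) - 2 := by
      have : (k:ℝ) ≤ ((m - 2 : ℕ) : ℝ) := by exact_mod_cast hkm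
      have h2 : ((m - 2 : ℕ) : ℝ) = (m:ℝ) - 2 := by
        have : 2 ≤ m := hm
        push_cast [Nat.cast_sub this]
        ring
      linarith
    have hcardR : (((insert r Y).card : ℕ) : ℝ) ≤ (k:ℝ) + 1 := by exact_mod_cast hcardins
    have hwlR := hwl
    have hchain : ∑ i ∈ univ.erase r, ES d a x B (T+1) i ≥ -(2*(k:ℝ)+1) * (D - B) := by
      have h1 : ∑ i ∈ (univ.erase r).filter (· ∉ Y), ES d a x B (T+1) i
          ≥ - (((k:ℝ)+1) * (D - B)) - 0 := by
        have := hA2sum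
        rw [hA2v] at this
        have h3 : ((insert r Y).card : ℝ) * (D - B) ≤ ((k:ℝ)+1) * (D-B) :=
          mul_le_mul_of_nonneg_right hcardR hDB0
        linarith
      linarith [hA1sum, hsplit2,
        mul_le_mul_of_nonneg_right hkR hDB0]
    have hfin : -(2*(k:ℝ)+1) * (D - B) ≥ -B := by
      have h1 : (2*(k:ℝ)+1) ≤ 2*(m:ℝ) - 3 := by linarith
      have h2 : (2*(k:ℝ)+1) * (D-B) ≤ (2*(m:ℝ)-3) * (D-B) :=
        mul_le_mul_of_nonneg_right h1 hDB0
      linarith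
    linarith [hsum0, hchain, hfin, hviol]
  · -- CASE B : every service is doomed
    push_neg at hU
    have hBe : ∀ i ∈ univ.erase r, B - D ≤ ES d a x B (T+1) i := by
      intro i hi
      by_cases hserved : ∃ t, 0 ≤ t ∧ t ≤ T ∧ ch d a x B t = i
      · exact hlastserve 0 (fun t _ h2 => hU t h2) i hserved
      · push_neg at hserved
        have hns : ∀ s, 0 ≤ s → s < T+1 → ch d a x B s ≠ i := by
          intro s h1 h2 hcs
          exact hserved s h1 (by omega) hcs
        have h1 : gq d a x B T i (T+1) = gq d a x B T i 0 :=
          gq_const d a x B i (by omega) le_rfl hns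
        have h2 := gq_top d a x B T i
        have h3 : (0:ℝ) ≤ gq d a x B T i 0 := by
          rw [gq]
          have hz : ES d a x B 0 i = 0 := rfl
          rw [hz]
          have : (0:ℝ) ≤ ∑ s ∈ Finset.Ico 0 (T+1), wt d s * xt x i s :=
            Finset.sum_nonneg (fun s _ =>
              mul_nonneg (wt_nonneg d hd s) (xt_nonneg x hx01 i s))
          linarith
        linarith
    have hsum0 : ES d a x B (T+1) r + ∑ i ∈ univ.erase r, ES d a x B (T+1) i = 0 := by
      rw [Finset.add_sum_erase univ _ (Finset.mem_univ r)]
      exact (hinv (T+1)).2.2.1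
    have hcard : ((univ.erase r).card : ℝ) = (m:ℝ) - 1 := by
      rw [Finset.card_erase_of_mem (Finset.mem_univ r), Finset.card_univ, Fintype.card_fin]
      have : 1 ≤ m := by omega
      push_cast [Nat.cast_sub this]
      ring
    have hlow : ((univ.erase r).card : ℝ) * (B - D) ≤ ∑ i ∈ univ.erase r, ES d a x B (T+1) i := by
      have := Finset.card_nsmul_le_sum (univ.erase r) (fun i => ES d a x B (T+1) i) (B-D) hBe
      rwa [nsmul_eq_mul] at this
    rw [hcard] at hlow
    nlinarith [hviol, hsum0, hlow, hDB0, hm2, hBeq]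

end NV

lemma ES_prefix : ∀ k : ℕ, k ≤ n → ∀ i : Fin m,
    ES d a x B k i = ∑ j ∈ univ.filter (fun j : Fin n => (j:ℕ) < k),
      d j * (x i j - (if ch d a x B (j:ℕ) = i then 1 else 0)) := by
  intro k
  induction k with
  | zero =>
    intro _ i
    have : univ.filter (fun j : Fin n => (j:ℕ) < 0) = ∅ := by
      ext j; simp
    rw [this]
    simp [ES]
  | succ k ih =>
    intro hk i
    have hkn : k < n := by omega
    have hset : univ.filter (fun j : Fin n => (j:ℕ) < k+1)
        = insert (⟨k, hkn⟩ : Fin n) (univ.filter (fun j : Fin n => (j:ℕ) < k)) := by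
      ext j
      simp only [Finset.mem_filter, Finset.mem_univ, true_and, Finset.mem_insert]
      constructor
      · intro h
        rcases Nat.lt_or_ge (j:ℕ) k with h' | h'
        · exact Or.inr h'
        · left
          apply Fin.ext
          simp
          omega
      · intro h
        rcases h with h | h
        · rw [h]; simp
        · omega
    have hnotmem : (⟨k, hkn⟩ : Fin n) ∉ univ.filter (fun j : Fin n => (j:ℕ) < k) := by
      simp
    rw [hset, Finset.sum_insert hnotmem, ← ih (by omega) i, ES_succ]
    have hw : wt d k = d ⟨k, hkn⟩ := by unfold wt; rw [dif_pos hkn]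
    have hx : xt x i k = x i ⟨k, hkn⟩ := by unfold xt; rw [dif_pos hkn]
    have hcast : ((⟨k, hkn⟩ : Fin n) : ℕ) = k := rfl
    rw [hw, hx, hcast]
    by_cases hc : ch d a x B k = i
    · rw [if_pos hc, if_pos hc]
      ring
    · rw [if_neg hc, if_neg hc]
      ring

end WCO


/-- Weighted chairman assignment with opening times: if row `i` has zero fractional mass
on columns `j < a i`, then the rounded assignment can also avoid those columns, while
keeping every prefix discrepancy at most `(1 - 1/(2m-2)) · max_j d_j`. -/
theorem weighted_chairman_opening (m n : ℕ) (hm : 1 < m) (hn : 0 < n)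
    (d : Fin n → ℝ) (hd : ∀ j, 0 < d j) (a : Fin m → Fin n)
    (x : Fin m → Fin n → ℝ)
    (hx01 : ∀ i j, 0 ≤ x i j ∧ x i j ≤ 1)
    (hxcol : ∀ j, ∑ i, x i j = 1)
    (hxa : ∀ i j, j < a i → x i j = 0) :
    ∃ y : Fin m → Fin n → ℝ,
      (∀ i j, y i j = 0 ∨ y i j = 1) ∧
      (∀ j, ∑ i, y i j = 1) ∧
      (∀ i j, j < a i → y i j = 0) ∧
      ∀ i t, |∑ j ∈ Iic t, d j * (x i j - y i j)| ≤
        (1 - 1 / (2 * (m : ℝ) - 2)) * (univ.sup' ⟨⟨0, hn⟩, mem_univ _⟩ d) := by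
  classical
  haveI : NeZero m := ⟨by omega⟩
  set D := univ.sup' ⟨⟨0, hn⟩, mem_univ _⟩ d with hDdef
  set B := (1 - 1 / (2 * (m : ℝ) - 2)) * D with hBdef
  have hDle : ∀ j, d j ≤ D := fun j => Finset.le_sup' d (mem_univ j)
  have hDpos : 0 < D := lt_of_lt_of_le (hd ⟨0, hn⟩) (hDle _)
  have hm2 : (2:ℝ) ≤ (m:ℝ) := by exact_mod_cast hm
  have h2m2 : (0:ℝ) < 2*(m:ℝ) - 2 := by linarith
  have hfrac0 : 0 ≤ 1 / (2*(m:ℝ) - 2) := by positivity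
  have hfrac1 : 1 / (2*(m:ℝ) - 2) ≤ 1 := by
    rw [div_le_one h2m2]; linarith
  have hB0 : 0 ≤ B := by
    rw [hBdef]
    apply mul_nonneg _ hDpos.le
    linarith
  have hBD : B ≤ D := by
    rw [hBdef]
    nlinarith [hDpos.le, hfrac0]
  have hBeq : (2*(m:ℝ)-3) * (D - B) = B := by
    rw [hBdef]
    have h2m2ne := h2m2.ne'
    linear_combination D * one_div_mul_cancel h2m2ne
  have hwD : ∀ t : ℕ, WCO.wt d t ≤ D := by
    intro t
    unfold WCO.wt
    split
    · exact hDle _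
    · exact hDpos.le
  have hBall : ∀ t : ℕ, ((m:ℝ)-1) * WCO.wt d t ≤ (m:ℝ)*B := by
    intro t
    have hw := hwD t
    have hw0 : 0 ≤ WCO.wt d t := WCO.wt_nonneg d hd t
    have hq : (m:ℝ) / (2*(m:ℝ)-2) ≤ 1 := by rw [div_le_one h2m2]; linarith
    have h1 : ((m:ℝ)-1) ≤ (m:ℝ)*(1 - 1/(2*(m:ℝ)-2)) := by
      have he : (m:ℝ)*(1 - 1/(2*(m:ℝ)-2)) = (m:ℝ) - (m:ℝ)/(2*(m:ℝ)-2) := by ring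
      rw [he]; linarith
    have key : ((m:ℝ)-1) * D ≤ (m:ℝ)*B :=
      calc ((m:ℝ)-1)*D ≤ ((m:ℝ)*(1 - 1/(2*(m:ℝ)-2)))*D :=
            mul_le_mul_of_nonneg_right h1 hDpos.le
      _ = (m:ℝ)*B := by rw [hBdef]; ring
    nlinarith
  have hinv := WCO.invariant d a x B hd hx01 hxcol hxa hB0 hm hBall
  refine ⟨fun i j => if WCO.ch d a x B (j:ℕ) = i then 1 else 0, ?_, ?_, ?_, ?_⟩
  · intro i j
    by_cases hc : WCO.ch d a x B (j:ℕ) = i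
    · right; simp [hc]
    · left; simp [hc]
  · intro j
    show ∑ i, (if WCO.ch d a x B (j:ℕ) = i then (1:ℝ) else 0) = 1
    rw [Finset.sum_ite_eq univ (WCO.ch d a x B (j:ℕ)) (fun _ => (1:ℝ))]
    simp
  · intro i j hj
    show (if WCO.ch d a x B (j:ℕ) = i then (1:ℝ) else 0) = 0
    have hjn : (j:ℕ) < n := j.isLt
    have hne := (hinv (j:ℕ)).2.2.2 hjn
    have hmem := WCO.pick_mem d a x B hne
    rw [WCO.allowedSet, Finset.mem_filter] at hmem
    have hopen : ((a (WCO.ch d a x B (j:ℕ)) : ℕ)) ≤ (j:ℕ) := hmem.2.1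
    rw [if_neg]
    intro hc
    rw [hc] at hopen
    have : (j:ℕ) < (a i : ℕ) := hj
    omega
  · intro i t
    have hES := WCO.ES_prefix d a x B ((t:ℕ)+1) (by omega) i
    have hIic : Iic t = univ.filter (fun j : Fin n => (j:ℕ) < (t:ℕ)+1) := by
      ext j
      simp only [Finset.mem_Iic, Finset.mem_filter, Finset.mem_univ, true_and, Fin.le_def]
      omega
    rw [hIic, ← hES, abs_le]
    constructor
    · exact (hinv ((t:ℕ)+1)).2.1 i
    · exact WCO.no_violation d a x B D hd hx01 hxcol hxa hB0 hm hBall hwD hBD hBeq t.isLt i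
end

section
/- For m = 2: for every fractional assignment x ∈ [0,1]^{2×n} and weights d ∈ (0,1]^n, there exists an integral assignment y ∈ {0,1}^{2×n} such that for every i ∈ {1,2} and t ∈ [n], |∑_{j≤t} d_j (x_{ij} − y_{ij})| ≤ 1/2 · max_j d_j. -/
open Finset

noncomputable def chE (D : ℝ) (d x : ℕ → ℝ) : ℕ → ℝ
  | 0 => 0
  | k+1 => let s := chE D d x k + d k * x k
           if s ≤ D/2 then s else s - d k

noncomputable def chY (D : ℝ) (d x : ℕ → ℝ) (k : ℕ) : ℝ :=
  if chE D d x k + d k * x k ≤ D/2 then 0 else 1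

lemma chE_succ (D : ℝ) (d x : ℕ → ℝ) (k : ℕ) :
    chE D d x (k+1) = chE D d x k + d k * (x k - chY D d x k) := by
  simp only [chE, chY]
  split <;> ring

lemma chE_eq_sum (D : ℝ) (d x : ℕ → ℝ) (t : ℕ) :
    chE D d x t = ∑ k ∈ range t, d k * (x k - chY D d x k) := by
  induction t with
  | zero => simp [chE]
  | succ k ih => rw [chE_succ, Finset.sum_range_succ, ih]

lemma chE_bound (D : ℝ) (d x : ℕ → ℝ) (hD : 0 ≤ D)
    (hd0 : ∀ k, 0 ≤ d k) (hdD : ∀ k, d k ≤ D)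
    (hx0 : ∀ k, 0 ≤ x k) (hx1 : ∀ k, x k ≤ 1) :
    ∀ t, |chE D d x t| ≤ D/2 := by
  intro t
  induction t with
  | zero => rw [abs_le]; constructor <;> simp [chE] <;> linarith
  | succ k ih =>
    rw [abs_le] at ih ⊢
    have h1 : 0 ≤ d k * x k := mul_nonneg (hd0 k) (hx0 k)
    have h2 : d k * x k ≤ d k := by nlinarith [hd0 k, hx1 k]
    have h3 := hdD k
    simp only [chE]
    split <;> constructor <;> (linarith)

lemma sum_Iic_fin (n : ℕ) (t : Fin n) (f : Fin n → ℝ) (g : ℕ → ℝ)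
    (h : ∀ j : Fin n, g j.1 = f j) :
    ∑ j ∈ Iic t, f j = ∑ k ∈ range (t.1 + 1), g k := by
  refine Finset.sum_bij' (fun j _ => j.1)
    (fun k hk => (⟨k, lt_of_lt_of_le (mem_range.mp hk) t.2⟩ : Fin n))
    ?_ ?_ ?_ ?_ ?_
  · intro a ha; simp only [mem_range]
    exact Nat.lt_succ_of_le (Fin.le_def.mp (mem_Iic.mp ha))
  · intro a ha; simp only [mem_Iic, Fin.le_def]
    exact Nat.lt_succ_iff.mp (mem_range.mp ha)
  · intro a _; rfl
  · intro a _; rfl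
  · intro a _; exact (h a).symm

/-- The weighted chairman assignment theorem for `m = 2`: the prefix discrepancy can be
bounded by `(1/2) · max_j d_j`. -/
theorem weighted_chairman_two (n : ℕ) (hn : 0 < n)
    (x : Fin 2 → Fin n → ℝ) (d : Fin n → ℝ)
    (hx01 : ∀ i j, 0 ≤ x i j ∧ x i j ≤ 1)
    (hxcol : ∀ j, ∑ i, x i j = 1)
    (hd : ∀ j, 0 < d j ∧ d j ≤ 1) :
    ∃ y : Fin 2 → Fin n → ℝ,
      (∀ i j, y i j = 0 ∨ y i j = 1) ∧
      (∀ j, ∑ i, y i j = 1) ∧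
      ∀ i t, |∑ j ∈ Iic t, d j * (x i j - y i j)| ≤
        (1 / 2) * (univ.sup' ⟨⟨0, hn⟩, mem_univ _⟩ d) := by
  set D := univ.sup' (⟨⟨0, hn⟩, mem_univ _⟩ : (univ : Finset (Fin n)).Nonempty) d with hDdef
  have hDle : ∀ j, d j ≤ D := fun j => Finset.le_sup' d (mem_univ j)
  have hDpos : 0 < D := lt_of_lt_of_le (hd ⟨0, hn⟩).1 (hDle _)
  set dN : ℕ → ℝ := fun k => if h : k < n then d ⟨k, h⟩ else 0 with hdN
  set xN : ℕ → ℝ := fun k => if h : k < n then x 0 ⟨k, h⟩ else 0 with hxN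
  have hd0 : ∀ k, 0 ≤ dN k := by
    intro k; simp only [hdN]; split
    · exact (hd _).1.le
    · exact le_refl 0
  have hdD : ∀ k, dN k ≤ D := by
    intro k; simp only [hdN]; split
    · exact hDle _
    · exact hDpos.le
  have hx0 : ∀ k, 0 ≤ xN k := by
    intro k; simp only [hxN]; split
    · exact (hx01 0 _).1
    · exact le_refl 0
  have hx1 : ∀ k, xN k ≤ 1 := by
    intro k; simp only [hxN]; split
    · exact (hx01 0 _).2
    · exact zero_le_one
  refine ⟨fun i j => if i = 0 then chY D dN xN j.1 else 1 - chY D dN xN j.1, ?_, ?_, ?_⟩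
  · intro i j
    by_cases hi : i = 0 <;> simp only [hi, if_true, if_false, chY] <;> split <;> simp
  · intro j
    rw [Fin.sum_univ_two]
    simp
  · intro i t
    have key : |∑ j ∈ Iic t, d j * (x 0 j - chY D dN xN j.1)| ≤ (1/2) * D := by
      have := chE_bound D dN xN hDpos.le hd0 hdD hx0 hx1 (t.1 + 1)
      rw [chE_eq_sum] at this
      rw [sum_Iic_fin n t _ (fun k => dN k * (xN k - chY D dN xN k))]
      · linarith [this]
      · intro j
        simp only [hdN, hxN, j.2, dif_pos]
    fin_cases i
    · simpa using key
    · show |∑ j ∈ Iic t, d j *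
          (x 1 j - (if (1 : Fin 2) = 0 then chY D dN xN j.1 else 1 - chY D dN xN j.1))| ≤ 1 / 2 * D
      simp only [if_neg (one_ne_zero)]
      have hx1j : ∀ j, x 1 j = 1 - x 0 j := by
        intro j
        have := hxcol j
        rw [Fin.sum_univ_two] at this
        linarith
      have : ∑ j ∈ Iic t, d j * (x 1 j - (1 - chY D dN xN j.1)) =
          -∑ j ∈ Iic t, d j * (x 0 j - chY D dN xN j.1) := by
        rw [← Finset.sum_neg_distrib]
        apply Finset.sum_congr rfl
        intro j _
        rw [hx1j j]; ring
      rw [this, abs_neg]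
      exact key
end

section
/- Let m ≥ 3 and consider m machines with closing times b_i = i·δ for 0 < δ < 1/m², and m batches of jobs where batch j is released at time j·δ and consists of m−j+1 jobs each of processing time 1/(m−j+1). Scheduling batch j entirely on machine j (feasible since r = jδ ≤ b_j) yields maximum flow-time 1 − mδ ≤ 1, while any schedule that assigns, for each j, one job of batch j to each of the machines j, j+1, …, m (as FIFO does) forces some machine to have total assigned processing time ∑_{j=1}^{m} 1/j, giving maximum flow-time at least H_m − mδ where H_m = ∑_{j=1}^m 1/j. -/
open Finset

/-- Jobs of the FIFO lower-bound instance: batch `j` (for `j : Fin m`) consists of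
`m - j` jobs. (In 1-indexed terms, batch `j` has `m - j + 1` jobs.) -/
abbrev Job (m : ℕ) := Σ j : Fin m, Fin (m - j.val)

/-- Release time of a job in batch `j` is `(j+1)·δ`. -/
noncomputable def jrel (δ : ℝ) {m : ℕ} (jk : Job m) : ℝ := ((jk.1 : ℕ) + 1) * δ

/-- Processing time of a job in batch `j` is `1/(m - j)` (1-indexed: `1/(m - j + 1)`). -/
noncomputable def jproc (m : ℕ) (jk : Job m) : ℝ := 1 / ((m : ℝ) - (jk.1 : ℕ))

/-- `C` is a valid vector of completion times for the assignment `σ`: every job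
completes after its release plus its processing time, and jobs on the same machine
are processed sequentially (their processing intervals are disjoint). -/
def ValidSched (m : ℕ) (δ : ℝ) (σ : Job m → Fin m) (C : Job m → ℝ) : Prop :=
  (∀ jk, jrel δ jk + jproc m jk ≤ C jk) ∧
  ∀ jk jk', jk ≠ jk' → σ jk = σ jk' →
    C jk ≤ C jk' - jproc m jk' ∨ C jk' ≤ C jk - jproc m jk

lemma chain_sum_le {α : Type*} [DecidableEq α] (C p : α → ℝ) (S : Finset α) :
    ∀ L U : ℝ, (∀ x ∈ S, 0 < p x) → (∀ x ∈ S, L ≤ C x - p x) →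
    (∀ x ∈ S, ∀ y ∈ S, x ≠ y → C x ≤ C y - p y ∨ C y ≤ C x - p x) →
    (∀ x ∈ S, C x ≤ U) → S.Nonempty → ∑ x ∈ S, p x ≤ U - L := by
  induction S using Finset.strongInduction with
  | _ S ih =>
    intro L U hp hL hdisj hU hne
    obtain ⟨x, hx, hmax⟩ := S.exists_max_image C hne
    by_cases h1 : S.erase x = ∅
    · have hS : S = {x} := by
        apply Finset.eq_singleton_iff_unique_mem.2
        exact ⟨hx, fun y hy => by
          by_contra h; exact (Finset.ne_empty_of_mem (Finset.mem_erase.2 ⟨h, hy⟩)) h1⟩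
      rw [hS, Finset.sum_singleton]
      have := hL x hx
      have := hU x hx
      linarith
    · have hsub : S.erase x ⊂ S := Finset.erase_ssubset hx
      have hne' : (S.erase x).Nonempty := Finset.nonempty_iff_ne_empty.2 h1
      have hU' : ∀ y ∈ S.erase x, C y ≤ C x - p x := by
        intro y hy
        have hyS := Finset.mem_of_mem_erase hy
        have hyx : y ≠ x := Finset.ne_of_mem_erase hy
        rcases hdisj x hx y hyS (Ne.symm hyx) with h | h
        · exfalso
          have := hmax y hyS
          have := hp y hyS
          linarith
        · exact h
      have := ih (S.erase x) hsub L (C x - p x)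
        (fun y hy => hp y (Finset.mem_of_mem_erase hy))
        (fun y hy => hL y (Finset.mem_of_mem_erase hy))
        (fun a ha b hb => hdisj a (Finset.mem_of_mem_erase ha) b (Finset.mem_of_mem_erase hb))
        hU' hne'
      have hsum : p x + ∑ y ∈ S.erase x, p y = ∑ y ∈ S, p y :=
        Finset.add_sum_erase S p hx
      have := hU x hx
      linarith

lemma jproc_pos (m : ℕ) (jk : Job m) : 0 < jproc m jk := by
  have : (jk.1 : ℕ) < m := jk.1.isLt
  have : ((jk.1 : ℕ) : ℝ) < (m : ℝ) := by exact_mod_cast this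
  unfold jproc
  have h2 : (0:ℝ) < (m:ℝ) - ((jk.1 : ℕ):ℝ) := by linarith
  positivity

/-- The FIFO lower-bound instance: machines close at times `b_i = (i+1)·δ`, batch `j`
is released at `(j+1)·δ` and may only go on machines `i ≥ j`. Scheduling batch `j`
on machine `j` achieves maximum flow-time at most `1`, while any schedule that assigns
one job of each batch `j` to each of the machines `j, …, m-1` (as FIFO does) gives some
machine total load `H_m = ∑_{j=1}^m 1/j`, forcing maximum flow-time at least
`H_m - m·δ`. -/
theorem fifo_lower_bound (m : ℕ) (hm : 3 ≤ m) (δ : ℝ) (hδ0 : 0 < δ)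
    (hδ : δ < 1 / ((m : ℝ) ^ 2)) :
    -- the schedule putting batch `j` on machine `j` is feasible and has
    -- maximum flow-time at most 1
    ((∀ jk : Job m, jrel δ jk ≤ (((Sigma.fst jk : Fin m) : ℕ) + 1) * δ) ∧
      ∃ C : Job m → ℝ, ValidSched m δ (fun jk => jk.1) C ∧
        ∀ jk, C jk - jrel δ jk ≤ 1) ∧
    -- any schedule spreading each batch over the still-open machines has a machine
    -- of load `H_m` and maximum flow-time at least `H_m - m·δ`
    ∀ σ : Job m → Fin m,
      (∀ jk, (jk.1 : ℕ) ≤ (σ jk : ℕ)) →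
      (∀ j i : Fin m, (j : ℕ) ≤ (i : ℕ) → ∃! k : Fin (m - j.val), σ ⟨j, k⟩ = i) →
      (∃ i : Fin m, ∑ jk ∈ univ.filter (fun jk => σ jk = i), jproc m jk
          = ∑ j ∈ Finset.range m, (1 : ℝ) / (j + 1)) ∧
      ∀ C : Job m → ℝ, ValidSched m δ σ C →
        ∃ jk, C jk - jrel δ jk ≥
          (∑ j ∈ Finset.range m, (1 : ℝ) / (j + 1)) - m * δ := by
  have hmpos : 0 < m := by omega
  constructor
  · constructor
    · intro jk; exact le_refl _
    · refine ⟨fun jk => jrel δ jk + ((jk.2 : ℕ) + 1) * jproc m jk, ⟨?_, ?_⟩, ?_⟩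
      · intro jk
        have hp := jproc_pos m jk
        have h1 : (1 : ℝ) ≤ ((jk.2 : ℕ) : ℝ) + 1 := by
          have := Nat.cast_nonneg (α := ℝ) (jk.2 : ℕ); linarith
        have := le_mul_of_one_le_left hp.le h1
        show jrel δ jk + jproc m jk ≤ jrel δ jk + (((jk.2 : ℕ) : ℝ) + 1) * jproc m jk
        linarith
      · rintro ⟨j, k⟩ ⟨j', k'⟩ hne heq
        simp only at heq
        subst heq
        have hkk : k ≠ k' := by
          intro h; subst h; exact hne rfl
        have hp := jproc_pos m ⟨j, k⟩
        rcases lt_or_gt_of_ne hkk with h | h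
        · left
          have hle : ((k : ℕ) : ℝ) + 1 ≤ ((k' : ℕ) : ℝ) := by exact_mod_cast h
          simp only [jproc, jrel] at hp ⊢
          have := mul_le_mul_of_nonneg_right hle hp.le
          linarith
        · right
          have hle : ((k' : ℕ) : ℝ) + 1 ≤ ((k : ℕ) : ℝ) := by exact_mod_cast h
          simp only [jproc, jrel] at hp ⊢
          have := mul_le_mul_of_nonneg_right hle hp.le
          linarith
      · rintro ⟨j, k⟩
        simp only [add_sub_cancel_left]
        have hk : (k : ℕ) + 1 ≤ m - (j : ℕ) := k.isLt
        have hjm : (j : ℕ) < m := j.isLt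
        have hcast : ((k : ℕ) : ℝ) + 1 ≤ (m : ℝ) - ((j : ℕ) : ℝ) := by
          have : ((k : ℕ) + 1 : ℕ) ≤ (m - (j : ℕ) : ℕ) := hk
          have h2 := Nat.cast_le (α := ℝ) |>.2 this
          push_cast [Nat.cast_sub hjm.le] at h2
          linarith
        have hpos : (0 : ℝ) < (m : ℝ) - ((j : ℕ) : ℝ) := by
          have : ((j : ℕ) : ℝ) < (m : ℝ) := by exact_mod_cast hjm
          linarith
        rw [jproc]
        rw [mul_one_div, div_le_one hpos]
        exact hcast
  · intro σ hσ huniq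
    set i : Fin m := ⟨m - 1, by omega⟩ with hi
    have hile : ∀ j : Fin m, (j : ℕ) ≤ (i : ℕ) := fun j => by
      have := j.isLt; simp [hi]; omega
    set S := univ.filter (fun jk : Job m => σ jk = i) with hS
    have hload : ∑ jk ∈ S, jproc m jk = ∑ j ∈ Finset.range m, (1 : ℝ) / (j + 1) := by
      rw [hS, Finset.sum_filter]
      rw [← Finset.univ_sigma_univ, Finset.sum_sigma]
      have hinner : ∀ j : Fin m,
          (∑ k : Fin (m - j.val), if σ ⟨j, k⟩ = i then jproc m ⟨j, k⟩ else 0)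
            = 1 / ((m : ℝ) - (j : ℕ)) := by
        intro j
        obtain ⟨k0, hk0, hk0u⟩ := huniq j i (hile j)
        rw [Finset.sum_eq_single k0]
        · simp [hk0, jproc]
        · intro k _ hkne
          have : ¬ σ ⟨j, k⟩ = i := fun h => hkne (hk0u k h)
          simp [this]
        · intro h; exact absurd (Finset.mem_univ k0) h
      rw [Finset.sum_congr rfl (fun j _ => hinner j)]
      rw [Fin.sum_univ_eq_sum_range (fun j => 1 / ((m : ℝ) - j))]
      rw [← Finset.sum_range_reflect (fun j => 1 / ((m : ℝ) - j)) m]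
      apply Finset.sum_congr rfl
      intro j hj
      have hj' : j < m := Finset.mem_range.1 hj
      have : ((m - 1 - j : ℕ) : ℝ) = (m : ℝ) - 1 - j := by
        have : m - 1 - j = m - (1 + j) := by omega
        rw [this, Nat.cast_sub (by omega)]
        push_cast; ring
      rw [this]
      ring_nf
    constructor
    · exact ⟨i, hload⟩
    · intro C hC
      -- S is nonempty: batch 0 has a job on machine i
      obtain ⟨k0, hk0, _⟩ := huniq ⟨0, hmpos⟩ i (hile _)
      have hne : S.Nonempty := ⟨⟨⟨0, hmpos⟩, k0⟩, by simp [hS, hk0]⟩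
      obtain ⟨x, hxS, hxmax⟩ := S.exists_max_image C hne
      have hbound : ∑ jk ∈ S, jproc m jk ≤ C x - δ := by
        apply chain_sum_le C (jproc m) S δ (C x)
        · intro y _; exact jproc_pos m y
        · intro y _
          have h1 := hC.1 y
          have hrel : δ ≤ jrel δ y := by
            have h1 : (1 : ℝ) ≤ ((y.1 : ℕ) : ℝ) + 1 := by
              have := Nat.cast_nonneg (α := ℝ) (y.1 : ℕ); linarith
            have := le_mul_of_one_le_left hδ0.le h1
            unfold jrel; linarith
          linarith
        · intro a ha b hb hab
          have hsa : σ a = i := (Finset.mem_filter.1 ha).2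
          have hsb : σ b = i := (Finset.mem_filter.1 hb).2
          exact hC.2 a b hab (hsa.trans hsb.symm)
        · exact hxmax
        · exact hne
      have hrelx : jrel δ x ≤ m * δ := by
        have h1 : (x.1 : ℕ) + 1 ≤ m := x.1.isLt
        have : ((x.1 : ℕ) : ℝ) + 1 ≤ (m : ℝ) := by exact_mod_cast h1
        unfold jrel; nlinarith
      refine ⟨x, ?_⟩
      rw [hload] at hbound
      have : C x - jrel δ x ≥ (∑ j ∈ Finset.range m, (1 : ℝ) / (j + 1)) + δ - m * δ := by
        linarith
      linarith
end

section
/- For the unweighted chairman assignment problem (all d_j = 1), the optimal discrepancy constant Δ(m) satisfies Δ(m) ≥ 1 − 1/(2m−2) for every integer m > 1; combined with the upper bound from the weighted theorem specialized to d ≡ 1, Δ(m) = 1 − 1/(2m−2). -/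
set_option linter.unusedSectionVars false
set_option maxHeartbeats 1000000

open Finset

/-- The optimal discrepancy constant `Δ(m)` of the (unweighted) chairman assignment
problem: the infimum of all constants `C` such that for every `n` and every fractional
assignment `x ∈ [0,1]^{m×n}` there is an integral assignment `y` with all prefix
discrepancies at most `C`. -/
noncomputable def chairmanDelta (m : ℕ) : ℝ :=
  sInf {C : ℝ | ∀ n : ℕ, 0 < n → ∀ x : Fin m → Fin n → ℝ,
    (∀ i j, 0 ≤ x i j ∧ x i j ≤ 1) →
    (∀ j, ∑ i, x i j = 1) →
    ∃ y : Fin m → Fin n → ℝ,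
      (∀ i j, y i j = 0 ∨ y i j = 1) ∧
      (∀ j, ∑ i, y i j = 1) ∧
      ∀ i t, |∑ j ∈ Iic t, (x i j - y i j)| ≤ C}

namespace ChairmanAux
attribute [local instance] Classical.propDecidable

variable (m n : ℕ)

/-- extension of `x` to `ℕ` columns -/
noncomputable def xe (x : Fin m → Fin n → ℝ) (i : Fin m) (j : ℕ) : ℝ :=
  if h : j < n then x i ⟨j, h⟩ else 0

/-- prefix sums -/
noncomputable def XX (x : Fin m → Fin n → ℝ) (i : Fin m) (T : ℕ) : ℝ :=
  ∑ j ∈ Finset.range T, xe m n x i j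

noncomputable def LL (x : Fin m → Fin n → ℝ) (B : ℝ) (i : Fin m) (T : ℕ) : ℤ :=
  ⌈XX m n x i T - B⌉

noncomputable def UU (x : Fin m → Fin n → ℝ) (B : ℝ) (i : Fin m) (T : ℕ) : ℤ :=
  ⌊XX m n x i T + B⌋

def INV (x : Fin m → Fin n → ℝ) (B : ℝ) (t : ℕ) (Y : Fin m → ℤ) : Prop :=
  (∀ i, Y i ≤ UU m n x B i t) ∧ (∑ i, Y i = t) ∧
  (∀ e, t ≤ e → e ≤ n → ∑ i, max (LL m n x B i e - Y i) 0 ≤ (e:ℤ) - t) ∧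
  (∀ e, t ≤ e → e ≤ n → (e:ℤ) - t ≤ ∑ i, (UU m n x B i e - Y i))

noncomputable def gseq (x : Fin m → Fin n → ℝ) (B : ℝ) : ℕ → Fin m → ℤ
  | 0 => fun _ => 0
  | (t+1) =>
    if h : ∃ i, INV m n x B (t+1) (Function.update (gseq x B t) i (gseq x B t i + 1))
    then Function.update (gseq x B t) h.choose (gseq x B t h.choose + 1) else gseq x B t

section basic

variable {m n : ℕ} (hm : 1 < m) {x : Fin m → Fin n → ℝ} {B : ℝ}
  (hx01 : ∀ i j, 0 ≤ x i j ∧ x i j ≤ 1) (hxsum : ∀ j, ∑ i, x i j = 1)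
  (hB : B = 1 - 1 / (2 * (m : ℝ) - 2))

include hm hB in
lemma hd_pos : 0 < 1 / (2 * (m : ℝ) - 2) := by
  have : (2:ℝ) ≤ (m:ℝ) := by exact_mod_cast hm
  have h : (0:ℝ) < 2 * (m:ℝ) - 2 := by linarith
  positivity

include hm hB in
lemma B_lt_one : B < 1 := by
  have := hd_pos hm hB
  rw [hB]; linarith

include hm hB in
lemma B_ge_half : 1/2 ≤ B := by
  have h2 : (2:ℝ) ≤ (m:ℝ) := by exact_mod_cast hm
  have h : 2 * (m:ℝ) - 2 ≥ 2 := by linarith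
  have : 1 / (2 * (m : ℝ) - 2) ≤ 1/2 := by
    apply one_div_le_one_div_of_le <;> linarith
  rw [hB]; linarith

include hm hB in
lemma md_le_one : (m:ℝ) * (1 / (2 * (m : ℝ) - 2)) ≤ 1 := by
  have h2 : (2:ℝ) ≤ (m:ℝ) := by exact_mod_cast hm
  have h : (0:ℝ) < 2 * (m:ℝ) - 2 := by linarith
  rw [mul_one_div, div_le_one h]
  linarith

include hm hB in
lemma two_m1_d : (2 * (m:ℝ) - 2) * (1 / (2 * (m : ℝ) - 2)) = 1 := by
  have h2 : (2:ℝ) ≤ (m:ℝ) := by exact_mod_cast hm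
  have h : (2 * (m:ℝ) - 2) ≠ 0 := by linarith
  rw [mul_one_div, div_self h]

include hx01 in
lemma xe_nonneg (i : Fin m) (j : ℕ) : 0 ≤ xe m n x i j := by
  unfold xe; split
  · exact (hx01 i _).1
  · exact le_rfl

include hx01 in
lemma XX_mono (i : Fin m) {s e : ℕ} (hse : s ≤ e) : XX m n x i s ≤ XX m n x i e := by
  unfold XX
  exact Finset.sum_le_sum_of_subset_of_nonneg (Finset.range_subset_range.2 hse)
    (fun j _ _ => xe_nonneg hx01 i j)

include hx01 in
lemma XX_nonneg (i : Fin m) (T : ℕ) : 0 ≤ XX m n x i T := by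
  have := XX_mono hx01 (x := x) i (Nat.zero_le T)
  simpa [XX] using this

include hxsum in
lemma XX_total {e : ℕ} (he : e ≤ n) : ∑ i, XX m n x i e = e := by
  unfold XX
  rw [Finset.sum_comm]
  have : ∀ j ∈ Finset.range e, ∑ i, xe m n x i j = 1 := by
    intro j hj
    have hjn : j < n := lt_of_lt_of_le (Finset.mem_range.1 hj) he
    simp only [xe, dif_pos hjn]
    exact hxsum _
  rw [Finset.sum_congr rfl this]
  simp

include hx01 in
lemma LL_mono (i : Fin m) {s e : ℕ} (hse : s ≤ e) : LL m n x B i s ≤ LL m n x B i e :=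
  Int.ceil_le_ceil (by linarith [XX_mono hx01 (x := x) i hse])

include hx01 in
lemma UU_mono (i : Fin m) {s e : ℕ} (hse : s ≤ e) : UU m n x B i s ≤ UU m n x B i e :=
  Int.floor_le_floor (by linarith [XX_mono hx01 (x := x) i hse])

include hm hB in
lemma LL_zero (i : Fin m) : LL m n x B i 0 = 0 := by
  have h1 := B_lt_one hm hB
  have h2 := B_ge_half hm hB
  have : XX m n x i 0 = 0 := by simp [XX]
  rw [LL, this]
  rw [Int.ceil_eq_zero_iff]
  constructor <;> simp <;> linarith

include hm hB in
lemma UU_zero (i : Fin m) : UU m n x B i 0 = 0 := by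
  have h1 := B_lt_one hm hB
  have h2 := B_ge_half hm hB
  have : XX m n x i 0 = 0 := by simp [XX]
  rw [UU, this]
  rw [Int.floor_eq_zero_iff]
  constructor <;> simp <;> linarith

include hm hx01 hxsum hB in
/-- Hall inequality H2 -/
lemma H2 {e : ℕ} (he : e ≤ n) : (e : ℤ) ≤ ∑ i, UU m n x B i e := by
  have hmpos : (0:ℕ) < m := by omega
  have key : (e : ℝ) - 1 < (((∑ i, UU m n x B i e : ℤ)) : ℝ) := by
    push_cast
    have h1 : ∀ i : Fin m, XX m n x i e + B - 1 < ((UU m n x B i e : ℤ) : ℝ) := by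
      intro i; have := Int.sub_one_lt_floor (XX m n x i e + B); unfold UU; linarith
    have h2 : ∑ i, (XX m n x i e + B - 1) < ∑ i : Fin m, ((UU m n x B i e : ℤ) : ℝ) :=
      Finset.sum_lt_sum_of_nonempty (by simp [Finset.univ_nonempty_iff]; exact Fin.pos_iff_nonempty.1 hmpos) (fun i _ => h1 i)
    have h3 : ∑ i, (XX m n x i e + B - 1) = (e : ℝ) + m * B - m := by
      simp only [Finset.sum_sub_distrib, Finset.sum_add_distrib, Finset.sum_const,
        Finset.card_univ, Fintype.card_fin, nsmul_eq_mul, mul_one]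
      rw [XX_total hxsum he]
    have h5 : (m:ℝ) * (1 - B) ≤ 1 := by
      have := md_le_one hm hB; rw [hB]
      calc (m:ℝ) * (1 - (1 - 1 / (2 * (m:ℝ) - 2))) = (m:ℝ) * (1 / (2 * (m:ℝ) - 2)) := by ring
      _ ≤ 1 := this
    calc (e:ℝ) - 1 ≤ (e:ℝ) + m * B - m := by nlinarith
    _ = ∑ i, (XX m n x i e + B - 1) := h3.symm
    _ < _ := h2
  have := Int.lt_iff_add_one_le.1 (by exact_mod_cast key : (e : ℤ) - 1 < ∑ i, UU m n x B i e)
  omega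

include hm hx01 hxsum hB in
lemma sumL_le {e : ℕ} (he : e ≤ n) : (∑ i, LL m n x B i e) ≤ (e : ℤ) := by
  have hmpos : (0:ℕ) < m := by omega
  have key : (((∑ i, LL m n x B i e : ℤ)) : ℝ) < (e : ℝ) + 1 := by
    push_cast
    have h1 : ∀ i : Fin m, ((LL m n x B i e : ℤ) : ℝ) < XX m n x i e - B + 1 := by
      intro i; have := Int.ceil_lt_add_one (XX m n x i e - B); unfold LL; linarith
    have h2 : ∑ i : Fin m, ((LL m n x B i e : ℤ) : ℝ) < ∑ i, (XX m n x i e - B + 1) :=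
      Finset.sum_lt_sum_of_nonempty (by simp [Finset.univ_nonempty_iff]; exact Fin.pos_iff_nonempty.1 hmpos) (fun i _ => h1 i)
    have h3 : ∑ i, (XX m n x i e - B + 1) = (e : ℝ) + m * (1 - B) := by
      simp only [Finset.sum_sub_distrib, Finset.sum_add_distrib, Finset.sum_const,
        Finset.card_univ, Fintype.card_fin, nsmul_eq_mul, mul_one]
      rw [XX_total hxsum he]; ring
    have h5 : (m:ℝ) * (1 - B) ≤ 1 := by
      have := md_le_one hm hB; rw [hB]
      calc (m:ℝ) * (1 - (1 - 1 / (2 * (m:ℝ) - 2))) = (m:ℝ) * (1 / (2 * (m:ℝ) - 2)) := by ring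
      _ ≤ 1 := this
    calc ∑ i : Fin m, ((LL m n x B i e : ℤ) : ℝ) < ∑ i, (XX m n x i e - B + 1) := h2
    _ = (e : ℝ) + m * (1 - B) := h3
    _ ≤ (e : ℝ) + 1 := by linarith
  have : (∑ i, LL m n x B i e) < (e : ℤ) + 1 := by exact_mod_cast key
  omega

include hm hx01 hxsum hB in
/-- Hall inequality H1 -/
lemma H1 {s e : ℕ} (hse : s ≤ e) (he : e ≤ n) :
    ∑ i, max (LL m n x B i e - UU m n x B i s) 0 ≤ (e : ℤ) - s := by
  by_cases hP : ∀ i, UU m n x B i s < LL m n x B i e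
  · have : ∀ i ∈ Finset.univ, max (LL m n x B i e - UU m n x B i s) 0
        = LL m n x B i e - UU m n x B i s := by
      intro i _; exact max_eq_left (by have := hP i; omega)
    rw [Finset.sum_congr rfl this, Finset.sum_sub_distrib]
    have h1 := sumL_le hm hx01 hxsum hB he
    have h2 := H2 hm hx01 hxsum hB (le_trans hse he)
    omega
  · push_neg at hP
    obtain ⟨i₀, hi₀⟩ := hP
    have hd := hd_pos hm hB
    have hdB : 1 - B = 1 / (2 * (m:ℝ) - 2) := by rw [hB]; ring
    have key : (((∑ i, max (LL m n x B i e - UU m n x B i s) 0 : ℤ)) : ℝ)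
        < ((e : ℝ) - s) + 1 := by
      have hz : max (LL m n x B i₀ e - UU m n x B i₀ s) 0 = 0 := by
        apply max_eq_right; omega
      rw [← Finset.add_sum_erase _ _ (Finset.mem_univ i₀), hz, zero_add]
      push_cast
      have hne : (Finset.univ.erase i₀).Nonempty := by
        have h2 : 2 ≤ Fintype.card (Fin m) := by simp only [Fintype.card_fin]; omega
        have := Finset.card_erase_of_mem (Finset.mem_univ i₀)
        rw [← Finset.card_pos]
        simp only [this, Finset.card_univ]
        omega
      have hterm : ∀ i ∈ Finset.univ.erase i₀,
          max (((LL m n x B i e : ℤ) : ℝ) - ((UU m n x B i s : ℤ) : ℝ)) 0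
          < (XX m n x i e - XX m n x i s) + 2 * (1 - B) := by
        intro i _
        have hA : 0 ≤ XX m n x i e - XX m n x i s := by
          linarith [XX_mono hx01 (x := x) i hse]
        have hLU : ((LL m n x B i e : ℤ) : ℝ) - ((UU m n x B i s : ℤ) : ℝ)
            < (XX m n x i e - XX m n x i s) + 2 * (1 - B) := by
          have hc := Int.ceil_lt_add_one (XX m n x i e - B)
          have hf := Int.sub_one_lt_floor (XX m n x i s + B)
          unfold LL UU; linarith
        rcases max_cases (((LL m n x B i e : ℤ) : ℝ) - ((UU m n x B i s : ℤ) : ℝ)) (0:ℝ)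
          with ⟨h, _⟩ | ⟨h, _⟩ <;> rw [h]
        · linarith
        · have : (0:ℝ) < 1 / (2 * (m:ℝ) - 2) := hd
          linarith [hdB ▸ hd]
      have hsum := Finset.sum_lt_sum_of_nonempty hne hterm
      have hsplit : ∑ i ∈ Finset.univ.erase i₀, ((XX m n x i e - XX m n x i s) + 2 * (1 - B))
          ≤ ((e:ℝ) - s) + 1 := by
        rw [Finset.sum_add_distrib, Finset.sum_const, nsmul_eq_mul]
        have hcard : ((Finset.univ.erase i₀).card : ℝ) = (m : ℝ) - 1 := by
          rw [Finset.card_erase_of_mem (Finset.mem_univ i₀)]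
          simp only [Finset.card_univ, Fintype.card_fin]
          have : (1:ℕ) ≤ m := by omega
          push_cast [this]; ring
        have hAsum : ∑ i ∈ Finset.univ.erase i₀, (XX m n x i e - XX m n x i s)
            ≤ (e:ℝ) - s := by
          have h1 : ∑ i, (XX m n x i e - XX m n x i s) = (e:ℝ) - s := by
            rw [Finset.sum_sub_distrib, XX_total hxsum he, XX_total hxsum (le_trans hse he)]
          rw [← h1, ← Finset.add_sum_erase _ _ (Finset.mem_univ i₀)]
          have : 0 ≤ XX m n x i₀ e - XX m n x i₀ s := by
            linarith [XX_mono hx01 (x := x) i₀ hse]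
          linarith
        have hone : ((m:ℝ) - 1) * (2 * (1 - B)) = 1 := by
          rw [hdB]
          have := two_m1_d hm hB
          calc ((m:ℝ) - 1) * (2 * (1 / (2 * (m:ℝ) - 2)))
              = (2 * (m:ℝ) - 2) * (1 / (2 * (m : ℝ) - 2)) := by ring
          _ = 1 := this
        rw [hcard, hone] at *
        linarith
      calc _ < _ := hsum
      _ ≤ _ := hsplit
    have : (∑ i, max (LL m n x B i e - UU m n x B i s) 0) < ((e : ℤ) - s) + 1 := by
      exact_mod_cast key
    omega

include hm hx01 hxsum hB in
lemma step {t : ℕ} {Y : Fin m → ℤ} (hI : INV m n x B t Y) (htn : t < n) :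
    ∃ i, INV m n x B (t+1) (Function.update Y i (Y i + 1)) := by
  obtain ⟨hYU, hYsum, hD, hR⟩ := hI
  -- choose the index
  have hchoice : ∃ i, Y i < UU m n x B i (t+1) ∧
      ∀ e, t+1 ≤ e → e ≤ n →
        (∑ k, max (LL m n x B k e - Y k) 0 = (e:ℤ) - t) → Y i < LL m n x B i e := by
    set P : Set ℕ := {e | t+1 ≤ e ∧ e ≤ n ∧
      ∑ k, max (LL m n x B k e - Y k) 0 = (e:ℤ) - t} with hPdef
    by_cases hP : P.Nonempty
    · set e0 := sInf P with he0def
      have he0 : e0 ∈ P := Nat.sInf_mem hP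
      obtain ⟨he01, he02, he03⟩ := he0
      have hex : ∃ i, Y i < LL m n x B i e0 ∧ Y i < UU m n x B i (t+1) := by
        by_contra hcon
        push_neg at hcon
        have hge : ∀ k, max (LL m n x B k e0 - Y k) 0
            ≤ max (LL m n x B k e0 - UU m n x B k (t+1)) 0 := by
          intro k
          by_cases hk : Y k < LL m n x B k e0
          · have := hcon k hk; omega
          · omega
        have h1 : ((e0:ℤ)) - t ≤ ∑ k, max (LL m n x B k e0 - UU m n x B k (t+1)) 0 := by
          rw [← he03]; exact Finset.sum_le_sum (fun k _ => hge k)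
        have h2 := H1 hm hx01 hxsum hB he01 he02
        omega
      obtain ⟨i, hi1, hi2⟩ := hex
      refine ⟨i, hi2, fun e he1 he2 he3 => ?_⟩
      have heP : e ∈ P := ⟨he1, he2, he3⟩
      have he0le : e0 ≤ e := Nat.sInf_le heP
      exact lt_of_lt_of_le hi1 (LL_mono hx01 i he0le)
    · have h1 := hR (t+1) (Nat.le_succ t) htn
      have hex : ∃ i, Y i < UU m n x B i (t+1) := by
        by_contra hcon
        push_neg at hcon
        have : ∑ i, (UU m n x B i (t+1) - Y i) ≤ 0 :=
          Finset.sum_nonpos (fun k _ => by have := hcon k; omega)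
        omega
      obtain ⟨i, hi⟩ := hex
      exact ⟨i, hi, fun e he1 he2 he3 => absurd (⟨e, he1, he2, he3⟩ : P.Nonempty) hP⟩
  obtain ⟨i, hiU, hicrit⟩ := hchoice
  set Y' := Function.update Y i (Y i + 1) with hY'def
  have hY'i : Y' i = Y i + 1 := Function.update_self i _ Y
  have hY'k : ∀ k, k ≠ i → Y' k = Y k := fun k hk => Function.update_of_ne hk _ Y
  have hY'ge : ∀ k, Y k ≤ Y' k := by
    intro k; by_cases hk : k = i
    · subst hk; omega
    · rw [hY'k k hk]
  have hsum' : ∑ k, Y' k = (∑ k, Y k) + 1 := by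
    rw [← Finset.add_sum_erase _ Y' (Finset.mem_univ i),
        ← Finset.add_sum_erase _ Y (Finset.mem_univ i), hY'i]
    have : ∑ k ∈ Finset.univ.erase i, Y' k = ∑ k ∈ Finset.univ.erase i, Y k :=
      Finset.sum_congr rfl (fun k hk => hY'k k (Finset.mem_erase.1 hk).1)
    omega
  refine ⟨i, ?_, ?_, ?_, ?_⟩
  · intro k
    show Y' k ≤ _
    by_cases hk : k = i
    · subst hk; rw [hY'i]; omega
    · rw [hY'k k hk]; exact le_trans (hYU k) (UU_mono hx01 k (Nat.le_succ t))
  · show ∑ k, Y' k = _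
    rw [hsum', hYsum]; push_cast; ring
  · intro e he1 he2
    show ∑ k, max (LL m n x B k e - Y' k) 0 ≤ _
    have he0 : t ≤ e := le_trans (Nat.le_succ t) he1
    have hptwise : ∀ k, max (LL m n x B k e - Y' k) 0 ≤ max (LL m n x B k e - Y k) 0 := by
      intro k; have := hY'ge k; omega
    by_cases hcrit : ∑ k, max (LL m n x B k e - Y k) 0 = (e:ℤ) - t
    · have hYi : Y i < LL m n x B i e := hicrit e he1 he2 hcrit
      have hsplit : ∑ k, max (LL m n x B k e - Y' k) 0
          ≤ (∑ k, max (LL m n x B k e - Y k) 0) - 1 := by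
        rw [← Finset.add_sum_erase _ _ (Finset.mem_univ i),
            ← Finset.add_sum_erase _ (fun k => max (LL m n x B k e - Y k) 0)
              (Finset.mem_univ i)]
        have heq : ∑ k ∈ Finset.univ.erase i, max (LL m n x B k e - Y' k) 0
            = ∑ k ∈ Finset.univ.erase i, max (LL m n x B k e - Y k) 0 :=
          Finset.sum_congr rfl (fun k hk => by rw [hY'k k (Finset.mem_erase.1 hk).1])
        rw [heq, hY'i]
        have h1 : max (LL m n x B i e - (Y i + 1)) 0 = LL m n x B i e - Y i - 1 := by omega
        have h2 : max (LL m n x B i e - Y i) 0 = LL m n x B i e - Y i := by omega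
        omega
      have := hD e he0 he2
      push_cast
      omega
    · have h1 : ∑ k, max (LL m n x B k e - Y k) 0 ≤ (e:ℤ) - t - 1 := by
        have := hD e he0 he2; omega
      have h2 : ∑ k, max (LL m n x B k e - Y' k) 0 ≤ ∑ k, max (LL m n x B k e - Y k) 0 :=
        Finset.sum_le_sum (fun k _ => hptwise k)
      push_cast
      omega
  · intro e he1 he2
    show _ ≤ ∑ k, (UU m n x B k e - Y' k)
    have he0 : t ≤ e := le_trans (Nat.le_succ t) he1
    have h1 := hR e he0 he2
    have h2 : ∑ k, (UU m n x B k e - Y' k) = (∑ k, (UU m n x B k e - Y k)) - 1 := by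
      rw [Finset.sum_sub_distrib, Finset.sum_sub_distrib, hsum']; ring
    push_cast
    omega

include hm hx01 hxsum hB in
lemma inv_gseq : ∀ t, t ≤ n → INV m n x B t (gseq m n x B t) := by
  intro t
  induction t with
  | zero =>
    intro _
    show INV m n x B 0 (fun _ => 0)
    refine ⟨?_, ?_, ?_, ?_⟩
    · intro i; rw [UU_zero hm hB]
    · simp
    · intro e he1 he2
      have h1 := H1 hm hx01 hxsum hB (Nat.zero_le e) he2
      have h2 : ∀ i ∈ Finset.univ, max (LL m n x B i e - UU m n x B i 0) 0
          = max (LL m n x B i e - (0:ℤ)) 0 := by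
        intro i _; rw [UU_zero hm hB]
      rw [Finset.sum_congr rfl h2] at h1
      simpa using h1
    · intro e he1 he2
      have h1 := H2 hm hx01 hxsum hB he2
      simpa using h1
  | succ t ih =>
    intro ht
    have htn : t < n := ht
    have hI := ih (le_of_lt htn)
    have hex := step hm hx01 hxsum hB hI htn
    rw [gseq, dif_pos hex]
    exact hex.choose_spec
include hm hx01 hxsum hB in
lemma upper_exists :
    ∃ y : Fin m → Fin n → ℝ,
      (∀ i j, y i j = 0 ∨ y i j = 1) ∧
      (∀ j, ∑ i, y i j = 1) ∧
      ∀ i t, |∑ j ∈ Iic t, (x i j - y i j)| ≤ B := by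
  classical
  set g : ℕ → Fin m → ℤ := gseq m n x B with hgdef
  have hInv : ∀ t, t ≤ n → INV m n x B t (g t) := inv_gseq hm hx01 hxsum hB
  have hcol : ∀ t : ℕ, t < n → ∃ i₀ : Fin m,
      ∀ i, g (t+1) i - g t i = if i = i₀ then 1 else 0 := by
    intro t htn
    have hex := step hm hx01 hxsum hB (hInv t (le_of_lt htn)) htn
    refine ⟨hex.choose, fun i => ?_⟩
    have hgs : g (t+1) = Function.update (g t) hex.choose (g t hex.choose + 1) := by
      show gseq m n x B (t+1) = _
      rw [gseq, dif_pos hex]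
    rw [hgs]
    by_cases hi : i = hex.choose
    · subst hi; rw [Function.update_self, if_pos rfl]; ring
    · rw [Function.update_of_ne hi, if_neg hi]; ring
  choose c hc using hcol
  set y : Fin m → Fin n → ℝ := fun i j => ((g ((j:ℕ)+1) i - g (j:ℕ) i : ℤ) : ℝ) with hydef
  have hyval : ∀ (i : Fin m) (j : Fin n),
      y i j = if i = c (j:ℕ) j.2 then (1:ℝ) else 0 := by
    intro i j
    rw [hydef]
    simp only []
    rw [hc (j:ℕ) j.2 i]
    by_cases hi : i = c (j:ℕ) j.2 <;> simp [hi]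
  refine ⟨y, ?_, ?_, ?_⟩
  · intro i j
    rw [hyval i j]
    by_cases hi : i = c (j:ℕ) j.2 <;> simp [hi]
  · intro j
    rw [Finset.sum_congr rfl (fun i _ => hyval i j)]
    simp
  · intro i t
    have htn : (t:ℕ) + 1 ≤ n := t.2
    have hIic : ∀ F : Fin n → ℝ, ∑ j ∈ Iic t, F j
        = ∑ jj ∈ Finset.range ((t:ℕ)+1), (if h : jj < n then F ⟨jj, h⟩ else 0) := by
      intro F
      refine Finset.sum_bij' (fun (j : Fin n) (_ : j ∈ Iic t) => (j : ℕ))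
        (fun jj hjj => (⟨jj, lt_of_lt_of_le (Finset.mem_range.1 hjj) htn⟩ : Fin n))
        ?_ ?_ ?_ ?_ ?_
      · intro a ha
        beta_reduce
        rw [Finset.mem_range]
        have h1 : a ≤ t := Finset.mem_Iic.1 ha
        have h2 : (a:ℕ) ≤ (t:ℕ) := h1
        omega
      · intro a ha
        beta_reduce
        rw [Finset.mem_Iic]
        have h1 : a < (t:ℕ) + 1 := Finset.mem_range.1 ha
        show (⟨a, _⟩ : Fin n) ≤ t
        rw [Fin.le_def]
        simpa using Nat.lt_succ_iff.1 h1
      · intro a ha; beta_reduce; exact Fin.eta a _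
      · intro a ha; rfl
      · intro a ha
        beta_reduce
        have h1 : a ≤ t := Finset.mem_Iic.1 ha
        have h2 : (a:ℕ) ≤ (t:ℕ) := h1
        rw [dif_pos (by omega : (a:ℕ) < n)]
    rw [Finset.sum_sub_distrib]
    have hx' : ∑ j ∈ Iic t, x i j = XX m n x i ((t:ℕ)+1) := by
      rw [hIic (fun j => x i j)]; rfl
    have hy' : ∑ j ∈ Iic t, y i j = ((g ((t:ℕ)+1) i : ℤ) : ℝ) := by
      rw [hIic (fun j => y i j)]
      have hcong : ∀ jj ∈ Finset.range ((t:ℕ)+1),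
          (if h : jj < n then y i ⟨jj, h⟩ else 0)
          = ((g (jj+1) i : ℤ) : ℝ) - ((g jj i : ℤ) : ℝ) := by
        intro jj hjj
        have h1 : jj < n := lt_of_lt_of_le (Finset.mem_range.1 hjj) htn
        rw [dif_pos h1, hydef]
        simp only []
        push_cast; ring
      rw [Finset.sum_congr rfl hcong, Finset.sum_range_sub (fun jj => ((g jj i : ℤ) : ℝ))]
      have hg0 : g 0 i = 0 := by show gseq m n x B 0 i = 0; rw [gseq]
      rw [hg0]; push_cast; ring
    rw [hx', hy']
    obtain ⟨hU, hsum, hDD, hRR⟩ := hInv ((t:ℕ)+1) htn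
    have hup : ((g ((t:ℕ)+1) i : ℤ) : ℝ) ≤ XX m n x i ((t:ℕ)+1) + B := by
      have h1 := hU i
      have h2 : ((g ((t:ℕ)+1) i : ℤ) : ℝ) ≤ ((UU m n x B i ((t:ℕ)+1) : ℤ) : ℝ) := by
        exact_mod_cast h1
      have h3 := Int.floor_le (XX m n x i ((t:ℕ)+1) + B)
      unfold UU at h2; linarith
    have hlo : XX m n x i ((t:ℕ)+1) - B ≤ ((g ((t:ℕ)+1) i : ℤ) : ℝ) := by
      have h1 := hDD ((t:ℕ)+1) le_rfl htn
      have h2 : ∀ k ∈ Finset.univ, (0:ℤ) ≤ max (LL m n x B k ((t:ℕ)+1) - g ((t:ℕ)+1) k) 0 :=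
        fun k _ => le_max_right _ _
      have h4 : ∑ k, max (LL m n x B k ((t:ℕ)+1) - g ((t:ℕ)+1) k) 0 = 0 := by
        have h5 : ((((t:ℕ)+1 : ℕ)) : ℤ) - (((t:ℕ)+1 : ℕ) : ℤ) = 0 := by ring
        have h6 := Finset.sum_nonneg h2
        omega
      have h3 : max (LL m n x B i ((t:ℕ)+1) - g ((t:ℕ)+1) i) 0 = 0 :=
        (Finset.sum_eq_zero_iff_of_nonneg h2).1 h4 i (Finset.mem_univ i)
      have h5 : LL m n x B i ((t:ℕ)+1) ≤ g ((t:ℕ)+1) i := by omega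
      have h6 := Int.le_ceil (XX m n x i ((t:ℕ)+1) - B)
      have h7 : ((LL m n x B i ((t:ℕ)+1) : ℤ) : ℝ) ≤ ((g ((t:ℕ)+1) i : ℤ) : ℝ) := by
        exact_mod_cast h5
      unfold LL at h7; linarith
    rw [abs_le]
    constructor <;> linarith

end basic

/-- Iic-sum as range-sum, generalized -/
lemma sum_Iic_eq {M : Type*} [AddCommMonoid M] {n : ℕ} (t : Fin n) (F : Fin n → M) :
    ∑ j ∈ Iic t, F j
      = ∑ jj ∈ Finset.range ((t:ℕ)+1), (if h : jj < n then F ⟨jj, h⟩ else 0) := by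
  have htn : (t:ℕ) + 1 ≤ n := t.2
  refine Finset.sum_bij' (fun (j : Fin n) (_ : j ∈ Iic t) => (j : ℕ))
    (fun jj hjj => (⟨jj, lt_of_lt_of_le (Finset.mem_range.1 hjj) htn⟩ : Fin n))
    ?_ ?_ ?_ ?_ ?_
  · intro a ha
    beta_reduce
    rw [Finset.mem_range]
    have h1 : a ≤ t := Finset.mem_Iic.1 ha
    have h2 : (a:ℕ) ≤ (t:ℕ) := h1
    omega
  · intro a ha
    beta_reduce
    rw [Finset.mem_Iic]
    have h1 : a < (t:ℕ) + 1 := Finset.mem_range.1 ha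
    show (⟨a, _⟩ : Fin n) ≤ t
    rw [Fin.le_def]
    simpa using Nat.lt_succ_iff.1 h1
  · intro a ha; beta_reduce; exact Fin.eta a _
  · intro a ha; rfl
  · intro a ha
    beta_reduce
    have h1 : a ≤ t := Finset.mem_Iic.1 ha
    have h2 : (a:ℕ) ≤ (t:ℕ) := h1
    rw [dif_pos (by omega : (a:ℕ) < n)]

/-- extract the chosen column index from a 0/1 assignment -/
lemma extract_choice {m n : ℕ} {y : Fin m → Fin n → ℝ}
    (hy01 : ∀ i j, y i j = 0 ∨ y i j = 1) (hysum : ∀ j, ∑ i, y i j = 1) :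
    ∀ j : Fin n, ∃ cj : Fin m, ∀ i, y i j = if i = cj then 1 else 0 := by
  intro j
  have hsum := hysum j
  have hex : ∃ i₀, y i₀ j = 1 := by
    by_contra hcon
    push_neg at hcon
    have hz : ∀ i ∈ Finset.univ, y i j = 0 :=
      fun i _ => (hy01 i j).resolve_right (hcon i)
    rw [Finset.sum_congr rfl hz] at hsum
    simp at hsum
  obtain ⟨i₀, hi₀⟩ := hex
  refine ⟨i₀, fun i => ?_⟩
  by_cases hii : i = i₀
  · subst hii; rw [if_pos rfl]; exact hi₀
  · rw [if_neg hii]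
    rcases hy01 i j with h | h
    · exact h
    · exfalso
      have hpair : ∑ k ∈ ({i, i₀} : Finset (Fin m)), y k j = 2 := by
        rw [Finset.sum_pair hii, h, hi₀]; norm_num
      have hle : ∑ k ∈ ({i, i₀} : Finset (Fin m)), y k j ≤ ∑ k, y k j := by
        apply Finset.sum_le_sum_of_subset_of_nonneg (Finset.subset_univ _)
        intro k _ _
        rcases hy01 k j with h' | h' <;> rw [h'] <;> norm_num
      rw [hpair, hsum] at hle
      norm_num at hle

lemma lower_bound (m : ℕ) (hm : 1 < m) (C : ℝ)
    (hC : ∀ n : ℕ, 0 < n → ∀ x : Fin m → Fin n → ℝ,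
      (∀ i j, 0 ≤ x i j ∧ x i j ≤ 1) →
      (∀ j, ∑ i, x i j = 1) →
      ∃ y : Fin m → Fin n → ℝ,
        (∀ i j, y i j = 0 ∨ y i j = 1) ∧
        (∀ j, ∑ i, y i j = 1) ∧
        ∀ i t, |∑ j ∈ Iic t, (x i j - y i j)| ≤ C) :
    1 - 1 / (2 * (m : ℝ) - 2) ≤ C := by
  by_cases hm2 : m = 2
  · subst hm2
    obtain ⟨y, hy01, hysum, hyb⟩ := hC 1 one_pos (fun _ _ => 1/2)
      (fun i j => by norm_num) (fun j => by simp [Fin.sum_univ_two])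
    obtain ⟨i₀, hi₀⟩ : ∃ i₀ : Fin 2, y i₀ 0 = 0 := by
      by_contra hcon
      push_neg at hcon
      have h0 := (hy01 0 0).resolve_left (hcon 0)
      have h1 := (hy01 1 0).resolve_left (hcon 1)
      have := hysum 0
      rw [Fin.sum_univ_two, h0, h1] at this
      norm_num at this
    have hb := hyb i₀ 0
    have : |∑ j ∈ Iic (0 : Fin 1), ((1:ℝ)/2 - y i₀ j)| = 1/2 := by
      have : (Iic (0 : Fin 1)) = {0} := rfl
      rw [this, Finset.sum_singleton, hi₀]
      norm_num
    rw [this] at hb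
    refine le_trans (le_of_eq ?_) hb
    norm_num
  · have hm3 : 3 ≤ m := by omega
    obtain ⟨p, rfl⟩ : ∃ p, m = p + 3 := ⟨m - 3, by omega⟩
    clear hm2 hm3 hm
    set d : ℝ := 1 / (2 * ((p:ℝ) + 3) - 2) with hddef
    have hpc : (0:ℝ) ≤ (p:ℝ) := Nat.cast_nonneg p
    have h2p : (0:ℝ) < 2*((p:ℝ)+3)-2 := by linarith
    have h2p' : 2*((p:ℝ)+3)-2 = 2*(p:ℝ)+4 := by ring
    have hne : (2*(p:ℝ)+4) ≠ 0 := by linarith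
    have hdpos : 0 < d := by rw [hddef]; positivity
    have hKd : (2*(p:ℝ)+4) * d = 1 := by
      rw [hddef, h2p', mul_one_div, div_self hne]
    have hgoal : 1 - 1 / (2 * ((p+3:ℕ) : ℝ) - 2) = (2*(p:ℝ)+3) * d := by
      have hcast : ((p+3:ℕ) : ℝ) = (p:ℝ)+3 := by push_cast; ring
      rw [hcast, hddef, h2p', mul_one_div, eq_div_iff hne, sub_mul, one_mul,
        div_mul_cancel₀ _ hne]
      ring
    rw [hgoal]
    -- the instance
    set w : ℕ → ℕ → ℕ := fun t k =>
      if t = 0 then (if k = p+2 then p+2 else 1)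
      else if t = p+1 then (if k = 0 then 2*p+2 else if k = 1 then 2 else 0)
      else (if k = 1 then 2 else if k = t+1 then 2*p+2 else 0) with hwdef
    set x : Fin (p+3) → Fin (p+2) → ℝ := fun i j => (w (j:ℕ) (i:ℕ) : ℝ) * d with hxdef
    have hwle : ∀ t k, w t k ≤ 2*p+4 := by
      intro t k; rw [hwdef]; dsimp only; split_ifs <;> omega
    have hx01 : ∀ i j, 0 ≤ x i j ∧ x i j ≤ 1 := by
      intro i j
      constructor
      · apply mul_nonneg (Nat.cast_nonneg _) hdpos.le
      · rw [hxdef]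
        calc ((w (j:ℕ) (i:ℕ) : ℝ)) * d ≤ (2*(p:ℝ)+4) * d := by
              apply mul_le_mul_of_nonneg_right _ hdpos.le
              exact_mod_cast hwle (j:ℕ) (i:ℕ)
        _ = 1 := hKd
    -- pointwise values of w
    have hw0 : ∀ k, k ≠ p+2 → w 0 k = 1 := by
      intro k hk; rw [hwdef]; beta_reduce; split_ifs <;> first | (exact ‹False›.elim) | omega
    have hw0' : w 0 (p+2) = p+2 := by
      rw [hwdef]; beta_reduce; split_ifs <;> first | (exact ‹False›.elim) | omega
    have hwmid0 : ∀ t k, 1 ≤ t → t ≤ p → k ≠ 1 → k ≠ t+1 → w t k = 0 := by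
      intro t k h1 h2 h3 h4; rw [hwdef]; beta_reduce; split_ifs <;> first | (exact ‹False›.elim) | omega
    have hwmid1 : ∀ t, 1 ≤ t → t ≤ p → w t 1 = 2 := by
      intro t h1 h2; rw [hwdef]; beta_reduce; split_ifs <;> first | (exact ‹False›.elim) | omega
    have hwmidv : ∀ t, 1 ≤ t → t ≤ p → w t (t+1) = 2*p+2 := by
      intro t h1 h2; rw [hwdef]; beta_reduce; split_ifs <;> first | (exact ‹False›.elim) | omega
    have hwfin0 : w (p+1) 0 = 2*p+2 := by
      rw [hwdef]; beta_reduce; split_ifs <;> first | (exact ‹False›.elim) | omega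
    have hwfin1 : w (p+1) 1 = 2 := by
      rw [hwdef]; beta_reduce; split_ifs <;> first | (exact ‹False›.elim) | omega
    -- column sums
    have hind : ∀ (v : ℕ) (a : ℝ), v < p+3 →
        ∑ k : Fin (p+3), (if (k:ℕ) = v then a else 0) = a := by
      intro v a hv
      rw [Finset.sum_eq_single (⟨v, hv⟩ : Fin (p+3))]
      · rw [if_pos rfl]
      · intro b _ hb
        rw [if_neg (fun hh => hb (Fin.ext hh))]
      · intro hmem; exact absurd (Finset.mem_univ _) hmem
    have hwsum : ∀ t : ℕ, t < p+2 → ∑ i : Fin (p+3), (w t (i:ℕ) : ℝ) = 2*(p:ℝ)+4 := by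
      intro t htn
      by_cases ht0 : t = 0
      · subst ht0
        have hterm : ∀ k : Fin (p+3),
            (w 0 (k:ℕ) : ℝ) = 1 + (if (k:ℕ) = p+2 then ((p:ℝ)+1) else 0) := by
          intro k
          by_cases hk : (k:ℕ) = p+2
          · rw [hk, hw0', if_pos rfl]; push_cast; ring
          · rw [hw0 _ hk, if_neg hk]; norm_num
        rw [Finset.sum_congr rfl (fun k _ => hterm k), Finset.sum_add_distrib,
          Finset.sum_const, Finset.card_univ, Fintype.card_fin, hind (p+2) _ (by omega)]
        push_cast; ring
      · by_cases htf : t = p+1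
        · subst htf
          have hterm : ∀ k : Fin (p+3),
              (w (p+1) (k:ℕ) : ℝ) = (if (k:ℕ) = 0 then (2*(p:ℝ)+2) else 0)
                + (if (k:ℕ) = 1 then (2:ℝ) else 0) := by
            intro k
            by_cases hk0 : (k:ℕ) = 0
            · rw [hk0, hwfin0, if_pos rfl, if_neg (by omega)]; push_cast; ring
            · by_cases hk1 : (k:ℕ) = 1
              · rw [hk1, hwfin1, if_neg (by omega), if_pos rfl]; norm_num
              · rw [if_neg hk0, if_neg hk1]
                have : w (p+1) (k:ℕ) = 0 := by
                  rw [hwdef]; beta_reduce; split_ifs <;> first | (exact ‹False›.elim) | omega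
                rw [this]; norm_num
          rw [Finset.sum_congr rfl (fun k _ => hterm k), Finset.sum_add_distrib,
            hind 0 _ (by omega), hind 1 _ (by omega)]
          ring
        · have h1t : 1 ≤ t := by omega
          have htp : t ≤ p := by omega
          have hterm : ∀ k : Fin (p+3),
              (w t (k:ℕ) : ℝ) = (if (k:ℕ) = 1 then (2:ℝ) else 0)
                + (if (k:ℕ) = t+1 then (2*(p:ℝ)+2) else 0) := by
            intro k
            by_cases hk1 : (k:ℕ) = 1
            · rw [hk1, hwmid1 t h1t htp, if_pos rfl, if_neg (by omega)]; norm_num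
            · by_cases hkv : (k:ℕ) = t+1
              · rw [hkv, hwmidv t h1t htp, if_neg (by omega), if_pos rfl]; push_cast; ring
              · rw [hwmid0 t _ h1t htp hk1 hkv, if_neg hk1, if_neg hkv]; norm_num
          rw [Finset.sum_congr rfl (fun k _ => hterm k), Finset.sum_add_distrib,
            hind 1 _ (by omega), hind (t+1) _ (by omega)]
          ring
    have hxsum : ∀ j : Fin (p+2), ∑ i, x i j = 1 := by
      intro j
      simp only [hxdef]
      rw [← Finset.sum_mul, hwsum (j:ℕ) j.2, hKd]
    obtain ⟨y, hy01, hysum, hyb⟩ := hC (p+2) (by omega) x hx01 hxsum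
    obtain ⟨c, hc⟩ : ∃ c : Fin (p+2) → Fin (p+3), ∀ j i, y i j = if i = c j then 1 else 0 := by
      choose c hc using extract_choice hy01 hysum
      exact ⟨c, fun j i => hc j i⟩
    set c' : ℕ → ℕ := fun t => if h : t < p+2 then ((c ⟨t, h⟩ : Fin (p+3)) : ℕ) else 0
      with hc'def
    have hdisc : ∀ (i : Fin (p+3)) (t : Fin (p+2)),
        ∑ j ∈ Iic t, (x i j - y i j)
        = d * ∑ jj ∈ Finset.range ((t:ℕ)+1),
            ((w jj (i:ℕ) : ℝ) - (if c' jj = (i:ℕ) then 2*(p:ℝ)+4 else 0)) := by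
      intro i t
      rw [sum_Iic_eq t (fun j => x i j - y i j), Finset.mul_sum]
      refine Finset.sum_congr rfl (fun jj hjj => ?_)
      have hjn : jj < p+2 := lt_of_lt_of_le (Finset.mem_range.1 hjj) t.2
      rw [dif_pos hjn]
      have hyv : y i ⟨jj, hjn⟩ = if c' jj = (i:ℕ) then 1 else 0 := by
        rw [hc ⟨jj, hjn⟩ i]
        simp only [hc'def]
        rw [dif_pos hjn]
        by_cases hh : i = c ⟨jj, hjn⟩
        · rw [if_pos hh, if_pos (by rw [hh])]
        · rw [if_neg hh, if_neg (fun hv => hh (Fin.ext hv.symm))]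
      simp only [hxdef]
      rw [hyv]
      by_cases hcc : c' jj = (i:ℕ)
      · rw [if_pos hcc, if_pos hcc, mul_sub, mul_comm d ((w jj (i:ℕ) : ℝ))]
        congr 1
        rw [mul_comm]; exact hKd.symm
      · rw [if_neg hcc, if_neg hcc, sub_zero, sub_zero, mul_comm]
    have hfinish : ∀ (v T : ℕ) (hv : v < p+3) (hT : T < p+2),
        |∑ jj ∈ Finset.range (T+1),
            ((w jj v : ℝ) - (if c' jj = v then 2*(p:ℝ)+4 else 0))| = 2*(p:ℝ)+3
        → (2*(p:ℝ)+3) * d ≤ C := by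
      intro v T hv hT hS
      have hb := hyb ⟨v, hv⟩ ⟨T, hT⟩
      rw [hdisc ⟨v, hv⟩ ⟨T, hT⟩,
        show ((⟨v, hv⟩ : Fin (p+3)) : ℕ) = v from rfl,
        show ((⟨T, hT⟩ : Fin (p+2)) : ℕ) = T from rfl,
        abs_mul, abs_of_pos hdpos, hS] at hb
      calc (2*(p:ℝ)+3) * d = d * (2*(p:ℝ)+3) := by ring
      _ ≤ C := hb
    have hc'lt : ∀ (t : ℕ) (h : t < p+2), c' t = ((c ⟨t, h⟩ : Fin (p+3)) : ℕ) := by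
      intro t h; simp only [hc'def]; rw [dif_pos h]
    -- main case analysis
    by_cases hx0 : c' 0 = p+2
    · by_cases hdev : ∃ t, 1 ≤ t ∧ t ≤ p ∧ c' t ≠ t+1
      · -- first deviation
        set S : Set ℕ := {t | 1 ≤ t ∧ t ≤ p ∧ c' t ≠ t+1} with hSdef
        have hSne : S.Nonempty := hdev
        set t0 := sInf S with ht0def
        obtain ⟨ht01, ht0p, ht0c⟩ : 1 ≤ t0 ∧ t0 ≤ p ∧ c' t0 ≠ t0+1 := Nat.sInf_mem hSne
        have hpath : ∀ j, 1 ≤ j → j < t0 → c' j = j+1 := by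
          intro j hj1 hj2
          by_contra hcon
          have : j ∈ S := ⟨hj1, by omega, hcon⟩
          have := Nat.sInf_le this
          omega
        obtain ⟨q, hq⟩ : ∃ q, t0 = q+1 := ⟨t0-1, by omega⟩
        refine hfinish (t0+1) t0 (by omega) (by omega) ?_
        have hG : ∀ jj ∈ Finset.range t0,
            ((w jj (t0+1) : ℝ) - (if c' jj = t0+1 then 2*(p:ℝ)+4 else 0))
            = if jj = 0 then (1:ℝ) else 0 := by
          intro jj hjj
          have hjlt : jj < t0 := Finset.mem_range.1 hjj
          by_cases hj0 : jj = 0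
          · subst hj0
            rw [hw0 (t0+1) (by omega), if_neg (show ¬ c' 0 = t0+1 by rw [hx0]; omega),
              if_pos rfl]
            norm_num
          · have h1j : 1 ≤ jj := by omega
            rw [hwmid0 jj (t0+1) h1j (by omega) (by omega) (by omega),
              if_neg (by rw [hpath jj h1j hjlt]; omega), if_neg hj0]
            norm_num
        have hcomp : ∑ jj ∈ Finset.range (t0+1),
            ((w jj (t0+1) : ℝ) - (if c' jj = (t0+1) then 2*(p:ℝ)+4 else 0))
            = 2*(p:ℝ)+3 := by
          rw [Finset.sum_range_succ, Finset.sum_congr rfl hG,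
            hwmidv t0 ht01 ht0p, if_neg ht0c]
          rw [hq]
          rw [Finset.sum_range_succ']
          have hz : ∀ jj ∈ Finset.range q, (if jj + 1 = 0 then (1:ℝ) else 0) = 0 := by
            intro jj _; rw [if_neg (by omega)]
          rw [Finset.sum_congr rfl hz, Finset.sum_const, if_pos rfl, smul_zero]
          push_cast; ring
        rw [hcomp, abs_of_pos (by linarith)]
      · -- full path, final column
        push_neg at hdev
        have hall : ∀ t, 1 ≤ t → t ≤ p → c' t = t+1 := fun t h1 h2 => hdev t h1 h2
        have hmidG : ∀ (v : ℕ), v ≤ 1 → ∀ jj ∈ Finset.range p,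
            ((w (jj+1) v : ℝ) - (if c' (jj+1) = v then 2*(p:ℝ)+4 else 0))
            = if v = 1 then (2:ℝ) else 0 := by
          intro v hv jj hjj
          have hjlt : jj < p := Finset.mem_range.1 hjj
          have h1j : 1 ≤ jj+1 := by omega
          have hjp : jj+1 ≤ p := by omega
          rw [if_neg (by rw [hall (jj+1) h1j hjp]; omega)]
          by_cases hv1 : v = 1
          · rw [hv1, hwmid1 (jj+1) h1j hjp, if_pos rfl]; norm_num
          · rw [hwmid0 (jj+1) v h1j hjp hv1 (by omega), if_neg hv1]; norm_num
        have hfinal : ∀ (v : ℕ), v ≤ 1 → c' (p+1) ≠ v →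
            ∑ jj ∈ Finset.range (p+1+1),
              ((w jj v : ℝ) - (if c' jj = v then 2*(p:ℝ)+4 else 0)) = 2*(p:ℝ)+3 := by
          intro v hv1 hvne
          rw [Finset.sum_range_succ, if_neg hvne, sub_zero]
          rw [Finset.sum_range_succ']
          rw [Finset.sum_congr rfl (hmidG v hv1), Finset.sum_const, Finset.card_range]
          rw [hw0 v (by omega), if_neg (by omega : ¬ c' 0 = v), sub_zero]
          by_cases hv : v = 1
          · rw [if_pos hv, hv, hwfin1]
            push_cast; ring
          · have hv0 : v = 0 := by omega
            rw [if_neg hv, hv0, hwfin0]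
            push_cast; ring
        by_cases hlast : c' (p+1) = 0
        · refine hfinish 1 (p+1) (by omega) (by omega) ?_
          rw [hfinal 1 (by omega) (by omega), abs_of_pos (by linarith)]
        · refine hfinish 0 (p+1) (by omega) (by omega) ?_
          rw [hfinal 0 (by omega) hlast, abs_of_pos (by linarith)]
    · -- deviation at column 0
      have h02 : (0:ℕ) < p+2 := by omega
      have hvlt : c' 0 < p+3 := by
        rw [hc'lt 0 h02]; exact (c ⟨0, h02⟩).2
      refine hfinish (c' 0) 0 hvlt h02 ?_
      rw [Finset.sum_range_succ, Finset.sum_range_zero, zero_add,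
        hw0 (c' 0) hx0, if_pos rfl]
      push_cast
      have hne' : (1:ℝ) - (2*(p:ℝ)+4) = -(2*(p:ℝ)+3) := by ring
      rw [hne', abs_neg, abs_of_pos (by linarith)]

end ChairmanAux


/-- `Δ(m) ≥ 1 - 1/(2m-2)`, and combined with the upper bound,
`Δ(m) = 1 - 1/(2m-2)`. -/
theorem chairmanDelta_eq (m : ℕ) (hm : 1 < m) :
    1 - 1 / (2 * (m : ℝ) - 2) ≤ chairmanDelta m ∧
    chairmanDelta m = 1 - 1 / (2 * (m : ℝ) - 2) := by
  have hmem : (1 - 1 / (2 * (m : ℝ) - 2)) ∈ {C : ℝ | ∀ n : ℕ, 0 < n →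
      ∀ x : Fin m → Fin n → ℝ,
      (∀ i j, 0 ≤ x i j ∧ x i j ≤ 1) →
      (∀ j, ∑ i, x i j = 1) →
      ∃ y : Fin m → Fin n → ℝ,
        (∀ i j, y i j = 0 ∨ y i j = 1) ∧
        (∀ j, ∑ i, y i j = 1) ∧
        ∀ i t, |∑ j ∈ Iic t, (x i j - y i j)| ≤ C} := by
    intro n hn x hx01 hxsum
    exact ChairmanAux.upper_exists hm hx01 hxsum rfl
  have hlb : ∀ C ∈ {C : ℝ | ∀ n : ℕ, 0 < n →
      ∀ x : Fin m → Fin n → ℝ,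
      (∀ i j, 0 ≤ x i j ∧ x i j ≤ 1) →
      (∀ j, ∑ i, x i j = 1) →
      ∃ y : Fin m → Fin n → ℝ,
        (∀ i j, y i j = 0 ∨ y i j = 1) ∧
        (∀ j, ∑ i, y i j = 1) ∧
        ∀ i t, |∑ j ∈ Iic t, (x i j - y i j)| ≤ C},
      1 - 1 / (2 * (m : ℝ) - 2) ≤ C :=
    fun C hC => ChairmanAux.lower_bound m hm C hC
  have heq : chairmanDelta m = 1 - 1 / (2 * (m : ℝ) - 2) := by
    rw [chairmanDelta]
    exact le_antisymm (csInf_le ⟨_, hlb⟩ hmem) (le_csInf ⟨_, hmem⟩ hlb)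
  exact ⟨heq.ge, heq⟩
end
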